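/- arXiv:1403.3065 — 6 statements merged into one kernel-verified Lean document; each statement's English description precedes it below -/
import Mathlib

section
/- Let A be a finitely graded k-algebra and x ∈ A_d (d ≥ 1) a homogeneous normal element (xA = Ax) which is a nonzerodivisor. If A/xA is a domain, then A is a domain. -/
set_option maxHeartbeats 1000000 in
set_option synthInstance.maxHeartbeats 400000 in
/-- Let `A` be a finitely graded `k`-algebra and `x ∈ A_d` (`d ≥ 1`) a homogeneous
normal element (`xA = Ax`) which is a nonzerodivisor.  If `A/xA` is a domain then
`A` is a domain.  Here `A/xA` is realized as the quotient of `A` by the two-sided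
ideal generated by `x`, via `RingQuot`. -/
theorem stmt_2 {k A : Type*} [Field k] [Ring A] [Algebra k A]
    (𝒜 : ℕ → Submodule k A) [GradedAlgebra 𝒜]
    (hconn : 𝒜 0 = Submodule.span k {(1 : A)})
    (hfg : Algebra.FiniteType k A)
    (x : A) (d : ℕ) (hd : 1 ≤ d) (hx : x ∈ 𝒜 d)
    (hnormal : {y : A | ∃ a : A, y = x * a} = {y : A | ∃ a : A, y = a * x})
    (hnzdl : ∀ a : A, x * a = 0 → a = 0) (hnzdr : ∀ a : A, a * x = 0 → a = 0)
    (hdom : IsDomain (RingQuot (fun a b : A => a = x ∧ b = 0))) :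
    IsDomain A := by
  classical
  haveI := hdom
  set r : A → A → Prop := fun a b : A => a = x ∧ b = 0 with hr
  -- basic closure properties of S = xA
  have zero_mem : (0:A) ∈ {y : A | ∃ a : A, y = x * a} := ⟨0, by simp⟩
  have add_mem : ∀ {u v : A}, u ∈ {y : A | ∃ a : A, y = x * a} →
      v ∈ {y : A | ∃ a : A, y = x * a} → u + v ∈ {y : A | ∃ a : A, y = x * a} := by
    rintro u v ⟨a, rfl⟩ ⟨b, rfl⟩; exact ⟨a + b, by rw [mul_add]⟩
  have neg_mem : ∀ {u : A}, u ∈ {y : A | ∃ a : A, y = x * a} →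
      -u ∈ {y : A | ∃ a : A, y = x * a} := by
    rintro u ⟨a, rfl⟩; exact ⟨-a, by rw [mul_neg]⟩
  have mulr : ∀ {u v : A}, u ∈ {y : A | ∃ a : A, y = x * a} →
      u * v ∈ {y : A | ∃ a : A, y = x * a} := by
    rintro u v ⟨a, rfl⟩; exact ⟨a * v, by rw [mul_assoc]⟩
  have mull : ∀ {u v : A}, v ∈ {y : A | ∃ a : A, y = x * a} →
      u * v ∈ {y : A | ∃ a : A, y = x * a} := by
    rintro u v ⟨a, rfl⟩
    obtain ⟨w, hw⟩ : ∃ w : A, u * x = x * w :=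
      (Set.ext_iff.mp hnormal (u * x)).mpr ⟨u, rfl⟩
    exact ⟨w * a, by rw [← mul_assoc, hw, mul_assoc]⟩
  let J : TwoSidedIdeal A := TwoSidedIdeal.mk' _ zero_mem add_mem neg_mem mull mulr
  have hJ : ∀ a : A, a ∈ J ↔ a ∈ {y : A | ∃ a : A, y = x * a} := fun a =>
    TwoSidedIdeal.mem_mk' _ _ _ _ _ _ a
  let π : A →+* J.ringCon.Quotient := J.ringCon.mk'
  have hπcoe : ∀ a : A, π a = (a : J.ringCon.Quotient) := fun _ => rfl
  have hπS : ∀ a : A, π a = 0 → ∃ a' : A, a = x * a' := by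
    intro a ha
    have h0 : π a = π 0 := by rw [ha, map_zero]
    rw [hπcoe, hπcoe, RingCon.eq] at h0
    exact (hJ a).mp ((TwoSidedIdeal.mem_iff J a).mpr h0)
  have hπx : π x = π 0 := by
    rw [hπcoe, hπcoe, RingCon.eq]
    exact (TwoSidedIdeal.mem_iff J x).mp ((hJ x).mpr ⟨1, (mul_one x).symm⟩)
  let φ : RingQuot r →+* J.ringCon.Quotient :=
    RingQuot.lift ⟨π, by rintro a b ⟨rfl, rfl⟩; simpa using hπx⟩
  have hker : ∀ a : A, RingQuot.mkRingHom r a = 0 → ∃ a' : A, a = x * a' := by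
    intro a ha
    apply hπS
    have h1 : φ (RingQuot.mkRingHom r a) = 0 := by rw [ha, map_zero]
    rwa [RingQuot.lift_mkRingHom_apply] at h1
  -- nontriviality
  haveI hnt : Nontrivial A := by
    refine ⟨0, 1, fun h => ?_⟩
    have : (0 : RingQuot r) = 1 := by
      rw [← map_zero (RingQuot.mkRingHom r), ← map_one (RingQuot.mkRingHom r), h]
    exact zero_ne_one this
  -- shift lemma
  have L1 : ∀ (kk : ℕ) (c : A), (DirectSum.decompose 𝒜 (x * c) kk : A) =
      if d ≤ kk then x * (DirectSum.decompose 𝒜 c (kk - d) : A) else 0 := by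
    intro kk c
    revert c
    refine DirectSum.Decomposition.inductionOn 𝒜 ?_ ?_ ?_
    · simp
    · intro i m
      have hxm : x * (m : A) ∈ 𝒜 (d + i) := SetLike.mul_mem_graded hx m.2
      rcases eq_or_ne kk (d + i) with hk | hk
      · subst hk
        rw [DirectSum.decompose_of_mem_same 𝒜 hxm, if_pos (Nat.le_add_right d i)]
        have h5 : d + i - d = i := by omega
        rw [h5, DirectSum.decompose_of_mem_same 𝒜 m.2]
      · rw [DirectSum.decompose_of_mem_ne 𝒜 hxm (Ne.symm hk)]
        split_ifs with hdk
        · rw [DirectSum.decompose_of_mem_ne 𝒜 m.2 (by omega : i ≠ kk - d), mul_zero]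
        · rfl
    · intro c c' hc hc'
      have h6 : (DirectSum.decompose 𝒜 (x * (c + c')) kk : A)
          = (DirectSum.decompose 𝒜 (x*c) kk : A) + (DirectSum.decompose 𝒜 (x*c') kk : A) := by
        rw [mul_add, DirectSum.decompose_add, DirectSum.add_apply, Submodule.coe_add]
      rw [h6, hc, hc']
      split_ifs with hdk
      · rw [DirectSum.decompose_add, DirectSum.add_apply, Submodule.coe_add, mul_add]
      · rw [add_zero]
  -- degree-dropping lemma
  have L2 : ∀ (c : A) (m : ℕ), x * c ∈ 𝒜 m → x * c ≠ 0 → d ≤ m ∧ c ∈ 𝒜 (m - d) := by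
    intro c m hmem hne
    have hdm : d ≤ m := by
      by_contra hlt
      push_neg at hlt
      apply hne
      have hcall : ∀ j, (DirectSum.decompose 𝒜 c j : A) = 0 := by
        intro j
        have h1 := L1 (d + j) c
        rw [if_pos (Nat.le_add_right d j)] at h1
        have h0 : (DirectSum.decompose 𝒜 (x*c) (d+j) : A) = 0 :=
          DirectSum.decompose_of_mem_ne 𝒜 hmem (by omega)
        rw [h0] at h1
        have h5 : d + j - d = j := by omega
        rw [h5] at h1
        exact hnzdl _ h1.symm
      have hc0 : c = 0 := by
        rw [← DirectSum.sum_support_decompose 𝒜 c]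
        exact Finset.sum_eq_zero fun j _ => hcall j
      rw [hc0, mul_zero]
    refine ⟨hdm, ?_⟩
    have h1 := L1 m c
    rw [if_pos hdm, DirectSum.decompose_of_mem_same 𝒜 hmem] at h1
    have hc : c = (DirectSum.decompose 𝒜 c (m-d) : A) := by
      have h2 : x * (c - (DirectSum.decompose 𝒜 c (m-d) : A)) = 0 := by
        rw [mul_sub, ← h1, sub_self]
      have h3 := hnzdl _ h2
      rwa [sub_eq_zero] at h3
    rw [hc]; exact SetLike.coe_mem _
  -- main homogeneous induction
  have L3 : ∀ N m n (a b : A), m + n = N → a ∈ 𝒜 m → b ∈ 𝒜 n → a ≠ 0 → b ≠ 0 → a * b ≠ 0 := by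
    intro N
    induction N using Nat.strong_induction_on with
    | _ N IH =>
      intro m n a b hN ha hb ha0 hb0 hab
      have hq : RingQuot.mkRingHom r a * RingQuot.mkRingHom r b = 0 := by
        rw [← map_mul, hab, map_zero]
      rcases mul_eq_zero.mp hq with h | h
      · obtain ⟨a', ha'⟩ := hker a h
        have hxane : x * a' ≠ 0 := ha' ▸ ha0
        obtain ⟨hdm, ha'mem⟩ := L2 a' m (ha' ▸ ha) hxane
        have ha'0 : a' ≠ 0 := fun hh => hxane (by rw [hh, mul_zero])
        have hab' : a' * b = 0 := hnzdl _ (by rw [← mul_assoc, ← ha', hab])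
        exact IH ((m-d)+n) (by omega) (m-d) n a' b rfl ha'mem hb ha'0 hb0 hab'
      · obtain ⟨b', hb'⟩ := hker b h
        have hxbne : x * b' ≠ 0 := hb' ▸ hb0
        obtain ⟨hdn, hb'mem⟩ := L2 b' n (hb' ▸ hb) hxbne
        have hb'0 : b' ≠ 0 := fun hh => hxbne (by rw [hh, mul_zero])
        obtain ⟨a'', ha''⟩ : ∃ w : A, a * x = x * w :=
          (Set.ext_iff.mp hnormal (a * x)).mpr ⟨a, rfl⟩
        have haxne : a * x ≠ 0 := fun hh => ha0 (hnzdr a hh)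
        have haxmem : a * x ∈ 𝒜 (m + d) := SetLike.mul_mem_graded ha hx
        obtain ⟨hdmd, ha''mem⟩ := L2 a'' (m+d) (ha'' ▸ haxmem) (ha'' ▸ haxne)
        have ha''0 : a'' ≠ 0 := fun hh => (ha'' ▸ haxne : x * a'' ≠ 0) (by rw [hh, mul_zero])
        have hab'' : a'' * b' = 0 :=
          hnzdl _ (by rw [← mul_assoc, ← ha'', mul_assoc, ← hb', hab])
        have hmm : m + d - d = m := by omega
        exact IH (m + (n - d)) (by omega) m (n-d) a'' b' rfl (hmm ▸ ha''mem) hb'mem ha''0 hb'0 hab''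
  haveI : NoZeroDivisors A := by
    constructor
    intro a b hab
    by_contra hcon
    push_neg at hcon
    obtain ⟨ha0, hb0⟩ := hcon
    have hsa : (DirectSum.decompose 𝒜 a).support.Nonempty := by
      rw [Finset.nonempty_iff_ne_empty]
      intro h
      exact ha0 (by rw [← DirectSum.sum_support_decompose 𝒜 a, h, Finset.sum_empty])
    have hsb : (DirectSum.decompose 𝒜 b).support.Nonempty := by
      rw [Finset.nonempty_iff_ne_empty]
      intro h
      exact hb0 (by rw [← DirectSum.sum_support_decompose 𝒜 b, h, Finset.sum_empty])
    set m := (DirectSum.decompose 𝒜 a).support.min' hsa with hm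
    set n := (DirectSum.decompose 𝒜 b).support.min' hsb with hn
    have ham : (DirectSum.decompose 𝒜 a m : A) ≠ 0 := by
      have h7 := Finset.min'_mem _ hsa
      rw [DFinsupp.mem_support_iff] at h7
      simpa [ZeroMemClass.coe_eq_zero] using h7
    have hbn : (DirectSum.decompose 𝒜 b n : A) ≠ 0 := by
      have h7 := Finset.min'_mem _ hsb
      rw [DFinsupp.mem_support_iff] at h7
      simpa [ZeroMemClass.coe_eq_zero] using h7
    have key : (DirectSum.decompose 𝒜 a m : A) * (DirectSum.decompose 𝒜 b n : A) = 0 := by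
      have h1 : DirectSum.decompose 𝒜 (a*b) = DirectSum.decompose 𝒜 a * DirectSum.decompose 𝒜 b :=
        DirectSum.decompose_mul 𝒜 a b
      have h2 : ((DirectSum.decompose 𝒜 a * DirectSum.decompose 𝒜 b) (m+n) : A) = 0 := by
        rw [← h1, hab]; simp
      rw [DirectSum.coe_mul_apply] at h2
      have hfilter : (((DirectSum.decompose 𝒜 a).support ×ˢ
            (DirectSum.decompose 𝒜 b).support).filter (fun ij => ij.1 + ij.2 = m + n))
          = {(m, n)} := by
        apply Finset.ext
        rintro ⟨i, j⟩
        simp only [Finset.mem_filter, Finset.mem_product, Finset.mem_singleton, Prod.mk.injEq]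
        constructor
        · rintro ⟨⟨hi, hj⟩, hij⟩
          have h3 := Finset.min'_le _ i hi
          have h4 := Finset.min'_le _ j hj
          rw [← hm] at h3
          rw [← hn] at h4
          constructor <;> omega
        · rintro ⟨rfl, rfl⟩
          exact ⟨⟨Finset.min'_mem _ _, Finset.min'_mem _ _⟩, rfl⟩
      rw [hfilter, Finset.sum_singleton] at h2
      exact h2
    exact L3 (m+n) m n _ _ rfl (SetLike.coe_mem _) (SetLike.coe_mem _) ham hbn key
  exact NoZeroDivisors.to_isDomain A
end

section
/- Let A be a finitely graded k-algebra with a homogeneous normal element x of positive degree. If the quotient ring A/xA is right noetherian, then A is right noetherian. -/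
/-!
Write `xA = Ax` for the two-sided ideal generated by the normal element `x`. As `A/xA` is right
noetherian, every right ideal `I` satisfies `I ⊆ N + xA` for some finitely generated `N ⊆ I`.

If some homogeneous right ideal were not finitely generated, Zorn's lemma would give a maximal
such `M`. The right ideal `(M : x) = {a | a x ∈ M}` is homogeneous, contains `M`, and
`M ∩ xA = (M : x) x`; so if `(M : x)` were finitely generated, so would be `M = N + (M : x) x`.
Hence `(M : x) = M`, i.e. `M = N + M x`, and since `deg x > 0` induction on the degree shows that
`M` is generated by the homogeneous components of the generators of `N`.

Finally, the leading forms of a right ideal `K` form a homogeneous right ideal, and right ideals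
`K ≤ K'` with the same leading forms are equal; so the ascending chain condition passes from
homogeneous right ideals to all right ideals.
-/

open MulOpposite DirectSum Submodule

namespace Submodule

theorem exists_fg_le_and_le_sup_ker_of_fg_map {R R₂ M M₂ : Type*} [Ring R] [Ring R₂]
    [AddCommGroup M] [Module R M] [AddCommGroup M₂] [Module R₂ M₂] {τ : R →+* R₂}
    [RingHomSurjective τ] (f : M →ₛₗ[τ] M₂) {I : Submodule R M} (hI : (I.map f).FG) :
    ∃ N ≤ I, N.FG ∧ I ≤ N ⊔ LinearMap.ker f := by
  obtain ⟨S, hSfin, hS⟩ := fg_def.mp hI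
  have hSI : S ⊆ f '' I := fun y hy => by
    simpa only [← map_coe, ← hS] using subset_span (R := R₂) hy
  obtain ⟨s, hsI, hsfin, hspan⟩ :=
    Set.exists_subset_image_finite_and (p := fun S => span R₂ S = I.map f) |>.mp
      ⟨S, hSI, hSfin, hS⟩
  refine ⟨span R s, span_le.mpr hsI, fg_span hsfin, ?_⟩
  rw [← LinearMap.map_le_map_iff, map_span, hspan]

variable {R : Type*} [Ring R] {x : R}

def rightColon (M : Submodule Rᵐᵒᵖ R) (x : R) (hxr : ∀ a : R, ∃ b, a * x = x * b) :
    Submodule Rᵐᵒᵖ R where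
  carrier := {a | a * x ∈ M}
  add_mem' {a b} ha hb := by
    change (a + b) * x ∈ M
    simpa only [add_mul] using M.add_mem ha hb
  zero_mem' := by simp
  smul_mem' c a ha := by
    obtain ⟨b, hb⟩ := hxr c.unop
    change a * c.unop * x ∈ M
    rw [mul_assoc, hb, ← mul_assoc]
    exact M.smul_mem (op b) ha

theorem mem_rightColon {M : Submodule Rᵐᵒᵖ R} {hxr : ∀ a : R, ∃ b, a * x = x * b} {a : R} :
    a ∈ M.rightColon x hxr ↔ a * x ∈ M := Iff.rfl

theorem le_rightColon (M : Submodule Rᵐᵒᵖ R) (hxr : ∀ a : R, ∃ b, a * x = x * b) :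
    M ≤ M.rightColon x hxr :=
  fun _ ha => M.smul_mem (op x) ha

theorem mul_mem_span_image_mul_right (hxr : ∀ a : R, ∃ b, a * x = x * b) {t : Set R} {a : R}
    (ha : a ∈ span Rᵐᵒᵖ t) : a * x ∈ span Rᵐᵒᵖ ((· * x) '' t) := by
  induction ha using span_induction with
  | mem a ha => exact subset_span ⟨a, ha, rfl⟩
  | zero => simp
  | add a b _ _ ha hb => simpa only [add_mul] using add_mem ha hb
  | smul c a _ ha =>
    obtain ⟨b, hb⟩ := hxr c.unop
    change a * c.unop * x ∈ _
    rw [mul_assoc, hb, ← mul_assoc]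
    exact smul_mem _ (op b) ha

theorem exists_mem_rightColon_sub_mul_mem (hxl : ∀ a : R, ∃ b, x * a = b * x)
    (hxr : ∀ a : R, ∃ b, a * x = x * b) {M N : Submodule Rᵐᵒᵖ R} (hNM : N ≤ M)
    (hM : M ≤ N ⊔ span Rᵐᵒᵖ {x}) {a : R} (ha : a ∈ M) :
    ∃ e ∈ M.rightColon x hxr, a - e * x ∈ N := by
  obtain ⟨b, hb, _, hc, rfl⟩ := mem_sup.mp (hM ha)
  obtain ⟨c, rfl⟩ := mem_span_singleton.mp hc
  obtain ⟨e, he⟩ := hxl c.unop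
  have hcx : c • x = e * x := he
  refine ⟨e, ?_, by simpa [hcx] using hb⟩
  rw [mem_rightColon, ← hcx]
  simpa using M.sub_mem ha (hNM hb)

theorem fg_of_le_sup_span_singleton (hxl : ∀ a : R, ∃ b, x * a = b * x)
    (hxr : ∀ a : R, ∃ b, a * x = x * b) {M N : Submodule Rᵐᵒᵖ R} (hN : N.FG) (hNM : N ≤ M)
    (hM : M ≤ N ⊔ span Rᵐᵒᵖ {x}) (hcolon : (M.rightColon x hxr).FG) : M.FG := by
  obtain ⟨t, ht⟩ := hcolon
  have htM : span Rᵐᵒᵖ ((· * x) '' t) ≤ M := by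
    refine span_le.mpr ?_
    rintro _ ⟨a, ha, rfl⟩
    exact mem_rightColon.mp (ht ▸ subset_span ha)
  suffices M = N ⊔ span Rᵐᵒᵖ ((· * x) '' t) from
    this ▸ hN.sup (fg_span (t.finite_toSet.image _))
  refine le_antisymm (fun a ha => ?_) (sup_le hNM htM)
  obtain ⟨e, he, hae⟩ := exists_mem_rightColon_sub_mul_mem hxl hxr hNM hM ha
  rw [← sub_add_cancel a (e * x)]
  exact add_mem_sup hae (mul_mem_span_image_mul_right hxr (ht ▸ he))

def spanSingletonTwoSided (x : R) (hxr : ∀ a : R, ∃ b, a * x = x * b) : TwoSidedIdeal R :=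
  .mk' (span Rᵐᵒᵖ {x}) (zero_mem _) (add_mem · ·) (neg_mem ·)
    (fun {c _} hy => by
      obtain ⟨b, rfl⟩ := mem_span_singleton.mp hy
      obtain ⟨e, he⟩ := hxr c
      change c * (x * b.unop) ∈ span Rᵐᵒᵖ {x}
      rw [← mul_assoc, he, mul_assoc]
      exact mem_span_singleton.mpr ⟨op (e * b.unop), rfl⟩)
    (fun {_ c} hy => smul_mem _ (op c) hy)

theorem mem_span_singleton_of_mkRingHom_eq_zero (hxr : ∀ a : R, ∃ b, a * x = x * b) {a : R}
    (ha : RingQuot.mkRingHom (fun a b : R => a = x ∧ b = 0) a = 0) : a ∈ span Rᵐᵒᵖ {x} := by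
  let T := spanSingletonTwoSided x hxr
  have hT : ∀ ⦃a b : R⦄, a = x ∧ b = 0 → T.ringCon.mk' a = T.ringCon.mk' b := by
    rintro _ _ ⟨rfl, rfl⟩
    refine Quotient.sound' ((T.rel_iff _ _).mpr ?_)
    simp [T, spanSingletonTwoSided, TwoSidedIdeal.mem_mk']
  have : a ∈ TwoSidedIdeal.ker T.ringCon.mk' := by
    rw [TwoSidedIdeal.mem_ker, ← RingQuot.lift_mkRingHom_apply _ hT, ha, map_zero]
  rw [TwoSidedIdeal.ker_ringCon_mk'] at this
  simpa [T, spanSingletonTwoSided, TwoSidedIdeal.mem_mk'] using this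

theorem exists_fg_le_and_le_sup_span_singleton (hxr : ∀ a : R, ∃ b, a * x = x * b)
    (hquot : IsNoetherianRing (RingQuot (fun a b : R => a = x ∧ b = 0))ᵐᵒᵖ)
    (I : Submodule Rᵐᵒᵖ R) : ∃ N ≤ I, N.FG ∧ I ≤ N ⊔ span Rᵐᵒᵖ {x} := by
  let π := RingQuot.mkRingHom (fun a b : R => a = x ∧ b = 0)
  have : RingHomSurjective π.op := ⟨fun b =>
    let ⟨a, ha⟩ := RingQuot.mkRingHom_surjective _ b.unop
    ⟨op a, congrArg op ha⟩⟩
  let f : R →ₛₗ[π.op] (RingQuot (fun a b : R => a = x ∧ b = 0))ᵐᵒᵖ :=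
    { toFun := fun a => op (π a)
      map_add' := by simp
      map_smul' := fun c a => by simp }
  obtain ⟨N, hNI, hN, hle⟩ := exists_fg_le_and_le_sup_ker_of_fg_map f (IsNoetherian.noetherian _)
  refine ⟨N, hNI, hN, hle.trans (sup_le_sup_left (fun a ha => ?_) N)⟩
  exact mem_span_singleton_of_mkRingHom_eq_zero hxr (op_injective ha)

end Submodule

section Graded

variable {A σ : Type*} [Ring A] [SetLike σ A] [AddSubgroupClass σ A] {𝒜 : ℕ → σ} [GradedRing 𝒜]

theorem mul_mem_of_forall_mul_homogeneous_mem {P : AddSubmonoid A}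
    (hP : ∀ a ∈ P, ∀ j, ∀ c ∈ 𝒜 j, a * c ∈ P) {a : A} (ha : a ∈ P) (c : A) : a * c ∈ P := by
  induction c using Decomposition.inductionOn 𝒜 with
  | zero => simp
  | homogeneous c => exact hP a ha _ _ c.2
  | add c c' hc hc' => rw [mul_add]; exact add_mem hc hc'

def AddSubmonoid.toRightIdeal (P : AddSubmonoid A) (hP : ∀ a ∈ P, ∀ j, ∀ c ∈ 𝒜 j, a * c ∈ P) :
    Submodule Aᵐᵒᵖ A :=
  { P with smul_mem' := fun c _ ha => mul_mem_of_forall_mul_homogeneous_mem hP ha c.unop }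

theorem coe_decompose_of_mem {a : A} {j : ℕ} (ha : a ∈ 𝒜 j) (i : ℕ) :
    (decompose 𝒜 a i : A) = if j = i then a else 0 := by
  split_ifs with h
  · exact h ▸ decompose_of_mem_same 𝒜 ha
  · exact decompose_of_mem_ne 𝒜 ha h

theorem isHomogeneous_span {T : Set A} (hT : ∀ t ∈ T, ∃ i, t ∈ 𝒜 i) :
    (span Aᵐᵒᵖ T).IsHomogeneous 𝒜 := by
  let P : AddSubmonoid A :=
    { carrier := {a | ∀ i, (decompose 𝒜 a i : A) ∈ span Aᵐᵒᵖ T}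
      add_mem' := fun ha hb i => by simpa using add_mem (ha i) (hb i)
      zero_mem' := by simp }
  have hP : ∀ a ∈ P, ∀ j, ∀ c ∈ 𝒜 j, a * c ∈ P := fun a ha j c hc i => by
    rw [coe_decompose_mul_of_right_mem 𝒜 i hc]
    split_ifs
    · exact smul_mem _ (op c) (ha _)
    · exact zero_mem _
  have : span Aᵐᵒᵖ T ≤ P.toRightIdeal hP := span_le.mpr fun t ht i => by
    obtain ⟨j, hj⟩ := hT t ht
    rw [coe_decompose_of_mem hj]
    split_ifs
    · exact subset_span ht
    · exact zero_mem _
  exact fun i a ha => this ha i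

theorem exists_fg_isHomogeneous_le {M N : Submodule Aᵐᵒᵖ A} (hM : M.IsHomogeneous 𝒜)
    (hN : N.FG) (hNM : N ≤ M) :
    ∃ N' : Submodule Aᵐᵒᵖ A, N'.FG ∧ N'.IsHomogeneous 𝒜 ∧ N ≤ N' ∧ N' ≤ M := by
  classical
  obtain ⟨s, rfl⟩ := hN
  let T : Finset A := s.biUnion fun u => (decompose 𝒜 u).support.image fun i => decompose 𝒜 u i
  have hT : ∀ t ∈ T, ∃ u ∈ s, ∃ i, t = decompose 𝒜 u i := by
    simp only [T, Finset.mem_biUnion, Finset.mem_image]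
    rintro t ⟨u, hu, i, -, rfl⟩
    exact ⟨u, hu, i, rfl⟩
  refine ⟨span Aᵐᵒᵖ T, fg_span T.finite_toSet, isHomogeneous_span fun t ht => ?_, ?_, ?_⟩
  · obtain ⟨u, -, i, rfl⟩ := hT t ht
    exact ⟨i, SetLike.coe_mem _⟩
  · refine span_le.mpr fun u hu => ?_
    rw [SetLike.mem_coe, ← sum_support_decompose 𝒜 u]
    refine sum_mem fun i hi => subset_span ?_
    simp only [T, Finset.coe_biUnion, Finset.coe_image, Set.mem_iUnion, Set.mem_image]
    exact ⟨u, hu, i, hi, rfl⟩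
  · refine span_le.mpr fun t ht => ?_
    obtain ⟨u, hu, i, rfl⟩ := hT t ht
    exact hM i (hNM (subset_span hu))

theorem Submodule.IsHomogeneous.rightColon {M : Submodule Aᵐᵒᵖ A} (hM : M.IsHomogeneous 𝒜)
    {x : A} {d : ℕ} (hx : x ∈ 𝒜 d) (hxr : ∀ a : A, ∃ b, a * x = x * b) :
    (M.rightColon x hxr).IsHomogeneous 𝒜 := fun i a ha => by
  have h := coe_decompose_mul_of_right_mem_of_le 𝒜 (a := a) hx (Nat.le_add_left d i)
  rw [Nat.add_sub_cancel] at h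
  rw [mem_rightColon, ← h]
  exact hM _ ha

theorem Submodule.IsHomogeneous.le_of_forall_sub_mul_mem {M N : Submodule Aᵐᵒᵖ A}
    (hM : M.IsHomogeneous 𝒜) (hN : N.IsHomogeneous 𝒜) {x : A} {d : ℕ} (hd : 0 < d)
    (hx : x ∈ 𝒜 d) (h : ∀ a ∈ M, ∃ e ∈ M, a - e * x ∈ N) : M ≤ N := by
  suffices hhom : ∀ m, ∀ a ∈ M, a ∈ 𝒜 m → a ∈ N from
    fun a ha => (hN.mem_iff 𝒜).mpr fun i => hhom i _ (hM i ha) (SetLike.coe_mem _)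
  intro m
  induction m using Nat.strong_induction_on with
  | _ m ih =>
    intro a ha ham
    obtain ⟨e, he, hae⟩ := h a ha
    have : a = decompose 𝒜 (a - e * x) m + decompose 𝒜 (e * x) m := by
      simp [decompose_sub, decompose_of_mem_same 𝒜 ham]
    rw [this]
    refine add_mem (hN m hae) ?_
    rw [coe_decompose_mul_of_right_mem 𝒜 m hx]
    split_ifs with hdm
    · exact smul_mem _ (op x) (ih (m - d) (by omega) _ (hM _ he) (SetLike.coe_mem _))
    · exact zero_mem _

theorem Submodule.IsHomogeneous.exists_maximal_not_fg {I : Submodule Aᵐᵒᵖ A}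
    (hI : I.IsHomogeneous 𝒜) (hIfg : ¬I.FG) :
    ∃ M, I ≤ M ∧ Maximal (fun J : Submodule Aᵐᵒᵖ A => J.IsHomogeneous 𝒜 ∧ ¬J.FG) M := by
  refine zorn_le_nonempty₀ {J | J.IsHomogeneous 𝒜 ∧ ¬J.FG}
    (fun c hc hchain J hJ => ⟨sSup c, ⟨?_, fun hfg => ?_⟩, ?_⟩) I ⟨hI, hIfg⟩
  · intro i a ha
    obtain ⟨K, hK, haK⟩ := (mem_sSup_of_directed ⟨J, hJ⟩ hchain.directedOn).mp ha
    exact le_sSup hK ((hc hK).1 i haK)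
  · obtain ⟨K, hK, hle⟩ := CompleteLattice.isCompactElement_iff_le_of_directed_sSup_le _ _ |>.mp
      ((fg_iff_compact _).mp hfg) c ⟨J, hJ⟩ hchain.directedOn le_rfl
    exact (hc hK).2 (le_antisymm (le_sSup hK) hle ▸ hfg)
  · exact fun K hK => le_sSup hK

theorem Submodule.IsHomogeneous.fg {x : A} {d : ℕ} (hd : 0 < d) (hx : x ∈ 𝒜 d)
    (hxl : ∀ a : A, ∃ b, x * a = b * x) (hxr : ∀ a : A, ∃ b, a * x = x * b)
    (hlift : ∀ I : Submodule Aᵐᵒᵖ A, ∃ N ≤ I, N.FG ∧ I ≤ N ⊔ span Aᵐᵒᵖ {x})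
    {I : Submodule Aᵐᵒᵖ A} (hI : I.IsHomogeneous 𝒜) : I.FG := by
  by_contra hIfg
  obtain ⟨M, -, ⟨hM, hMfg⟩, hmax⟩ := hI.exists_maximal_not_fg hIfg
  obtain ⟨N, hNM, hN, hMN⟩ := hlift M
  refine hMfg (fg_of_le_sup_span_singleton hxl hxr hN hNM hMN ?_)
  by_contra hCfg
  have hCM : M.rightColon x hxr ≤ M := hmax ⟨hM.rightColon hx hxr, hCfg⟩ (M.le_rightColon hxr)
  obtain ⟨N', hN'fg, hN', hNN', hN'M⟩ := exists_fg_isHomogeneous_le hM hN hNM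
  refine hMfg (le_antisymm ?_ hN'M ▸ hN'fg)
  refine hM.le_of_forall_sub_mul_mem hN' hd hx fun a ha => ?_
  obtain ⟨e, he, hae⟩ := exists_mem_rightColon_sub_mul_mem hxl hxr hNM hMN ha
  exact ⟨e, hCM he, hNN' hae⟩

variable (𝒜) in
/-- The right ideal of leading forms of `K`: its degree-`n` part consists of the degree-`n`
components of the elements of `K` of degree at most `n`. -/
def leadingForms (K : Submodule Aᵐᵒᵖ A) : Submodule Aᵐᵒᵖ A :=
  AddSubmonoid.toRightIdeal
    { carrier := {y | ∀ n, ∃ b ∈ K, (∀ i, n < i → (decompose 𝒜 b i : A) = 0) ∧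
        (decompose 𝒜 b n : A) = decompose 𝒜 y n}
      add_mem' := fun {y z} hy hz n => by
        obtain ⟨b, hbK, hb, hby⟩ := hy n
        obtain ⟨c, hcK, hc, hcz⟩ := hz n
        refine ⟨b + c, add_mem hbK hcK, fun i hi => ?_, ?_⟩
        · simp [decompose_add, hb i hi, hc i hi]
        · simp [decompose_add, hby, hcz]
      zero_mem' := fun n => ⟨0, zero_mem _, by simp, by simp⟩ }
    (fun y hy j c hc n => by
      by_cases hjn : j ≤ n
      · obtain ⟨b, hbK, hb, hby⟩ := hy (n - j)
        refine ⟨b * c, smul_mem K (op c) hbK, fun i hi => ?_, ?_⟩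
        · rw [coe_decompose_mul_of_right_mem 𝒜 i hc, hb (i - j) (by omega), zero_mul, ite_self]
        · simp only [coe_decompose_mul_of_right_mem_of_le 𝒜 hc hjn, hby]
      · refine ⟨0, zero_mem _, by simp, ?_⟩
        rw [coe_decompose_mul_of_right_mem_of_not_le 𝒜 hc hjn]
        simp)

theorem isHomogeneous_leadingForms (K : Submodule Aᵐᵒᵖ A) :
    (leadingForms 𝒜 K).IsHomogeneous 𝒜 := fun i y hy n => by
  rw [coe_decompose_of_mem (SetLike.coe_mem _)]
  split_ifs with hin
  · exact hin ▸ hy i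
  · exact ⟨0, zero_mem _, by simp, by simp⟩

theorem leadingForms_mono {K K' : Submodule Aᵐᵒᵖ A} (h : K ≤ K') :
    leadingForms 𝒜 K ≤ leadingForms 𝒜 K' := fun y hy n => by
  obtain ⟨b, hbK, hb⟩ := hy n
  exact ⟨b, h hbK, hb⟩

theorem decompose_mem_leadingForms {K : Submodule Aᵐᵒᵖ A} {a : A} (ha : a ∈ K) {n : ℕ}
    (hdeg : ∀ i, n < i → (decompose 𝒜 a i : A) = 0) :
    (decompose 𝒜 a n : A) ∈ leadingForms 𝒜 K := fun m => by
  rw [coe_decompose_of_mem (SetLike.coe_mem _)]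
  split_ifs with hnm
  · exact hnm ▸ ⟨a, ha, hdeg, rfl⟩
  · exact ⟨0, zero_mem _, by simp, by simp⟩

theorem exists_forall_ge_decompose_eq_zero (a : A) :
    ∃ N, ∀ i, N ≤ i → (decompose 𝒜 a i : A) = 0 := by
  classical
  obtain ⟨N, hN⟩ := Finset.exists_nat_subset_range (decompose 𝒜 a).support
  refine ⟨N, fun i hi => ?_⟩
  have : i ∉ (decompose 𝒜 a).support := fun h => absurd (Finset.mem_range.mp (hN h)) (by omega)
  simp [DFinsupp.notMem_support_iff.mp this]

theorem le_of_le_of_leadingForms_le {K K' : Submodule Aᵐᵒᵖ A} (hKK' : K ≤ K')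
    (hL : leadingForms 𝒜 K' ≤ leadingForms 𝒜 K) : K' ≤ K := by
  suffices h : ∀ N, ∀ a ∈ K', (∀ i, N ≤ i → (decompose 𝒜 a i : A) = 0) → a ∈ K from
    fun a ha => (exists_forall_ge_decompose_eq_zero a).elim fun N hN => h N a ha hN
  intro N
  induction N with
  | zero =>
    intro a _ ha
    classical
    rw [← sum_support_decompose 𝒜 a]
    exact sum_mem fun i _ => ha i (Nat.zero_le i) ▸ zero_mem _
  | succ N ih =>
    intro a ha hdeg
    obtain ⟨b, hbK, hb, hba⟩ := hL (decompose_mem_leadingForms ha fun i hi => hdeg i hi) N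
    rw [decompose_of_mem_same 𝒜 (SetLike.coe_mem _)] at hba
    rw [← sub_add_cancel a b]
    refine add_mem (ih _ (sub_mem ha (hKK' hbK)) fun i hi => ?_) hbK
    rcases hi.eq_or_lt with rfl | hi
    · simp [decompose_sub, hba]
    · simp [decompose_sub, hb i hi, hdeg i hi]

theorem isNoetherian_of_forall_isHomogeneous_fg
    (h : ∀ I : Submodule Aᵐᵒᵖ A, I.IsHomogeneous 𝒜 → I.FG) : IsNoetherian Aᵐᵒᵖ A := by
  refine monotone_stabilizes_iff_noetherian.mp fun f => ?_
  let L := fun n => leadingForms 𝒜 (f n)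
  have hL : Monotone L := fun m n hmn => leadingForms_mono (f.monotone hmn)
  have hsup : (⨆ n, L n).IsHomogeneous 𝒜 := fun i a ha => by
    obtain ⟨n, hn⟩ := (mem_iSup_of_directed _ hL.directed_le).mp ha
    exact mem_iSup_of_mem n (isHomogeneous_leadingForms _ i hn)
  obtain ⟨_, ⟨n, rfl⟩, hn⟩ := CompleteLattice.isCompactElement_iff_le_of_directed_sSup_le _ _ |>.mp
    ((fg_iff_compact _).mp (h _ hsup)) _ (Set.range_nonempty L) hL.directed_le.directedOn_range
    le_rfl
  exact ⟨n, fun m hmn => le_antisymm (f.monotone hmn)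
    (le_of_le_of_leadingForms_le (f.monotone hmn) ((le_iSup L m).trans hn))⟩

end Graded

theorem stmt_3_general {k A : Type*} [Field k] [Ring A] [Algebra k A]
    (𝒜 : ℕ → Submodule k A) [GradedAlgebra 𝒜]
    (x : A) (d : ℕ) (hd : 1 ≤ d) (hx : x ∈ 𝒜 d)
    (hnormal : {y : A | ∃ a : A, y = x * a} = {y : A | ∃ a : A, y = a * x})
    (hquot : IsNoetherianRing (RingQuot (fun a b : A => a = x ∧ b = 0))ᵐᵒᵖ) :
    IsNoetherianRing Aᵐᵒᵖ := by
  have hxl : ∀ a : A, ∃ b, x * a = b * x := fun a => (Set.ext_iff.mp hnormal (x * a)).mp ⟨a, rfl⟩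
  have hxr : ∀ a : A, ∃ b, a * x = x * b := fun a => (Set.ext_iff.mp hnormal (a * x)).mpr ⟨a, rfl⟩
  have : IsNoetherian Aᵐᵒᵖ A := isNoetherian_of_forall_isHomogeneous_fg fun _ hI =>
    hI.fg hd hx hxl hxr (exists_fg_le_and_le_sup_span_singleton hxr hquot)
  exact isNoetherian_of_linearEquiv (opLinearEquiv Aᵐᵒᵖ)

/-- Let `A` be a finitely graded `k`-algebra with a homogeneous normal element `x`
of positive degree.  If the quotient ring `A/xA` (the quotient by the two-sided
ideal generated by `x`) is right noetherian, then `A` is right noetherian.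
Right noetherianity of a ring `R` is expressed as `IsNoetherianRing Rᵐᵒᵖ`. -/
theorem stmt_3 {k A : Type*} [Field k] [Ring A] [Algebra k A]
    (𝒜 : ℕ → Submodule k A) [GradedAlgebra 𝒜]
    (hconn : 𝒜 0 = Submodule.span k {(1 : A)})
    (hfg : Algebra.FiniteType k A)
    (x : A) (d : ℕ) (hd : 1 ≤ d) (hx : x ∈ 𝒜 d)
    (hnormal : {y : A | ∃ a : A, y = x * a} = {y : A | ∃ a : A, y = a * x})
    (hquot : IsNoetherianRing (RingQuot (fun a b : A => a = x ∧ b = 0))ᵐᵒᵖ) :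
    IsNoetherianRing Aᵐᵒᵖ :=
  stmt_3_general 𝒜 x d hd hx hnormal hquot
end

section
/- Let A be a finitely graded k-algebra with Hilbert series h_A(t) = 1/p(t) for a polynomial p(t) ∈ ℤ[t] with constant term 1. If p has a complex root r with |r| < 1, then A has exponential growth: limsup_n (dim_k A_0 + ... + dim_k A_n)^{1/n} > 1. -/
/-!
If `limsup (a₀ + ⋯ + aₙ) ^ (1/n) ≤ 1`, the Hilbert series `∑ aₙ tⁿ` converges absolutely on the
open unit disc, and evaluating `h_A · p = 1` at the root `r` through a Cauchy product gives
`h_A(r) · 0 = 1`. The recursion for the coefficients of `1 / p` bounds `aₙ` by `(∑ |pⱼ|) ^ n`, which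
keeps the `n`-th roots bounded, so that the real `limsup` is not a junk value.
-/

open Filter Finset Polynomial

section PowerSeriesInverse

variable {R : Type*} [CommRing R] {a : ℕ → R} {p : R[X]}

theorem sum_antidiagonal_mul_coeff_of_mk_mul_eq_one
    (h : PowerSeries.mk a * (p : PowerSeries R) = 1) (n : ℕ) :
    ∑ kl ∈ antidiagonal n, a kl.1 * p.coeff kl.2 = if n = 0 then 1 else 0 := by
  simpa [PowerSeries.coeff_mul, PowerSeries.coeff_one] using congrArg (PowerSeries.coeff n) h

theorem coeff_zero_of_mk_mul_eq_one (hp0 : p.coeff 0 = 1)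
    (h : PowerSeries.mk a * (p : PowerSeries R) = 1) : a 0 = 1 := by
  simpa [hp0] using sum_antidiagonal_mul_coeff_of_mk_mul_eq_one h 0

theorem coeff_succ_of_mk_mul_eq_one (hp0 : p.coeff 0 = 1)
    (h : PowerSeries.mk a * (p : PowerSeries R) = 1) (n : ℕ) :
    a (n + 1) = -∑ k ∈ range (n + 1), a k * p.coeff (n + 1 - k) := by
  have hsum := sum_antidiagonal_mul_coeff_of_mk_mul_eq_one h (n + 1)
  rw [Nat.sum_antidiagonal_eq_sum_range_succ (fun i j => a i * p.coeff j), sum_range_succ,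
    Nat.sub_self, hp0, mul_one, if_neg n.succ_ne_zero] at hsum
  exact eq_neg_of_add_eq_zero_right hsum

end PowerSeriesInverse

section CoefficientBound

variable {R : Type*} [CommRing R] [LinearOrder R] [IsStrictOrderedRing R]

theorem sum_abs_coeff_le_sum_support (p : R[X]) (s : Finset ℕ) :
    ∑ j ∈ s, |p.coeff j| ≤ ∑ j ∈ p.support, |p.coeff j| := by
  rw [← sum_filter_ne_zero]
  refine sum_le_sum_of_subset_of_nonneg (fun j hj => ?_) fun _ _ _ => abs_nonneg _
  simp only [mem_filter, ne_eq, abs_eq_zero] at hj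
  exact mem_support_iff.mpr hj.2

theorem one_le_sum_abs_coeff {p : R[X]} (hp0 : p.coeff 0 = 1) :
    1 ≤ ∑ j ∈ p.support, |p.coeff j| := by
  simpa [hp0] using sum_abs_coeff_le_sum_support p {0}

theorem abs_le_pow_of_mk_mul_eq_one {a : ℕ → R} {p : R[X]} (hp0 : p.coeff 0 = 1)
    (h : PowerSeries.mk a * (p : PowerSeries R) = 1) (n : ℕ) :
    |a n| ≤ (∑ j ∈ p.support, |p.coeff j|) ^ n := by
  set M := ∑ j ∈ p.support, |p.coeff j|
  have hM : 1 ≤ M := one_le_sum_abs_coeff hp0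
  induction n using Nat.strong_induction_on with
  | _ n ih =>
    rcases n with _ | m
    · simp [coeff_zero_of_mk_mul_eq_one hp0 h]
    have htail : ∑ k ∈ range (m + 1), |p.coeff (m + 1 - k)| ≤ M := calc
      _ ≤ ∑ k ∈ range (m + 2), |p.coeff (m + 2 - 1 - k)| :=
        sum_le_sum_of_subset_of_nonneg (range_subset_range.mpr (by omega))
          fun _ _ _ => abs_nonneg _
      _ = ∑ j ∈ range (m + 2), |p.coeff j| := sum_range_reflect (fun j => |p.coeff j|) _
      _ ≤ M := sum_abs_coeff_le_sum_support p _
    calc |a (m + 1)| = |∑ k ∈ range (m + 1), a k * p.coeff (m + 1 - k)| := by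
          rw [coeff_succ_of_mk_mul_eq_one hp0 h, abs_neg]
      _ ≤ ∑ k ∈ range (m + 1), M ^ m * |p.coeff (m + 1 - k)| := by
          refine (abs_sum_le_sum_abs _ _).trans (sum_le_sum fun k hk => ?_)
          rw [abs_mul]
          have hk : k ≤ m := Nat.lt_succ_iff.mp (mem_range.mp hk)
          gcongr
          exact (ih k (by omega)).trans (pow_le_pow_right₀ hM hk)
      _ ≤ M ^ m * M := by rw [← mul_sum]; gcongr
      _ = M ^ (m + 1) := (pow_succ M m).symm

end CoefficientBound

section RootGrowth

variable {a : ℕ → ℝ}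

theorem isBoundedUnder_rpow_inv_sum_range_of_le_pow (ha : ∀ n, 0 ≤ a n) {M : ℝ} (hM : 1 ≤ M)
    (h : ∀ n, a n ≤ M ^ n) :
    IsBoundedUnder (· ≤ ·) atTop fun n => (∑ i ∈ range (n + 1), a i) ^ (n : ℝ)⁻¹ := by
  refine isBoundedUnder_of_eventually_le (a := 2 * M) ?_
  filter_upwards [eventually_gt_atTop 0] with n hn
  rw [Real.rpow_inv_le_iff_of_pos (sum_nonneg fun i _ => ha i) (by positivity)
    (Nat.cast_pos.mpr hn), Real.rpow_natCast]
  calc ∑ i ∈ range (n + 1), a i ≤ ∑ i ∈ range (n + 1), M ^ n :=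
        sum_le_sum fun i hi => (h i).trans (pow_le_pow_right₀ hM (Nat.lt_succ_iff.mp
          (mem_range.mp hi)))
    _ = (n + 1) * M ^ n := by simp
    _ ≤ 2 ^ n * M ^ n := by
        gcongr
        exact_mod_cast Nat.lt_two_pow_self
    _ = (2 * M) ^ n := (mul_pow 2 M n).symm

theorem summable_mul_pow_of_limsup_rpow_inv_sum_range_le_one (ha : ∀ n, 0 ≤ a n)
    (hbdd : IsBoundedUnder (· ≤ ·) atTop fun n => (∑ i ∈ range (n + 1), a i) ^ (n : ℝ)⁻¹)
    (hlim : limsup (fun n => (∑ i ∈ range (n + 1), a i) ^ (n : ℝ)⁻¹) atTop ≤ 1)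
    {x : ℝ} (hx0 : 0 ≤ x) (hx1 : x < 1) : Summable fun n => a n * x ^ n := by
  obtain ⟨y, hxy, hy1⟩ := exists_between hx1
  have hy0 : 0 < y := hx0.trans_lt hxy
  have hev := eventually_lt_of_limsup_lt (hlim.trans_lt ((one_lt_inv₀ hy0).mpr hy1)) hbdd
  refine Summable.of_norm_bounded_eventually_nat
    (summable_geometric_of_lt_one (div_nonneg hx0 hy0.le) ((div_lt_one hy0).mpr hxy)) ?_
  filter_upwards [hev, eventually_gt_atTop 0] with n hn hn0
  rw [Real.rpow_inv_lt_iff_of_pos (sum_nonneg fun i _ => ha i) (by positivity)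
    (Nat.cast_pos.mpr hn0), Real.rpow_natCast] at hn
  calc ‖a n * x ^ n‖ = a n * x ^ n := by
        rw [Real.norm_of_nonneg (mul_nonneg (ha n) (pow_nonneg hx0 n))]
    _ ≤ (∑ i ∈ range (n + 1), a i) * x ^ n := by
        gcongr
        exact single_le_sum (fun i _ => ha i) (self_mem_range_succ n)
    _ ≤ y⁻¹ ^ n * x ^ n := by gcongr
    _ = (x / y) ^ n := by rw [← mul_pow, inv_mul_eq_div]

end RootGrowth

theorem tsum_smul_pow_mul_aeval_eq_one {R 𝕜 : Type*} [CommRing R] [NormedCommRing 𝕜]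
    [CompleteSpace 𝕜] [Algebra R 𝕜] {a : ℕ → R} {p : R[X]}
    (h : PowerSeries.mk a * (p : PowerSeries R) = 1) {r : 𝕜}
    (hsum : Summable fun n => ‖a n • r ^ n‖) :
    (∑' n, a n • r ^ n) * aeval r p = 1 := by
  have hp : aeval r p = ∑' j, p.coeff j • r ^ j := by
    rw [aeval_eq_sum_range, tsum_eq_sum fun j hj => ?_]
    rw [coeff_eq_zero_of_natDegree_lt (by simpa using hj), zero_smul]
  have hpsum : Summable fun j => ‖p.coeff j • r ^ j‖ :=
    summable_of_ne_finset_zero (s := p.support) fun j hj => by simp [notMem_support_iff.mp hj]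
  have hterm : ∀ n, ∑ kl ∈ antidiagonal n, a kl.1 • r ^ kl.1 * p.coeff kl.2 • r ^ kl.2
      = if n = 0 then 1 else 0 := by
    intro n
    calc _ = (∑ kl ∈ antidiagonal n, a kl.1 * p.coeff kl.2) • r ^ n := by
          rw [sum_smul]
          refine sum_congr rfl fun kl hkl => ?_
          rw [smul_mul_smul, ← pow_add, mem_antidiagonal.mp hkl]
      _ = _ := by
          rw [sum_antidiagonal_mul_coeff_of_mk_mul_eq_one h]
          split_ifs with hn <;> simp [hn]
  rw [hp, tsum_mul_tsum_eq_tsum_sum_antidiagonal_of_summable_norm hsum hpsum, tsum_congr hterm,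
    tsum_ite_eq]

open Filter in
theorem stmt_9_general {k A : Type*} [Field k] [Ring A] [Algebra k A]
    (𝒜 : ℕ → Submodule k A)
    (p : Polynomial ℤ) (hp0 : p.coeff 0 = 1)
    (hhilb : (PowerSeries.mk fun n : ℕ => (Module.finrank k (𝒜 n) : ℤ)) *
      (p : PowerSeries ℤ) = 1)
    (hroot : ∃ r : ℂ, ‖r‖ < 1 ∧ Polynomial.aeval r p = 0) :
    1 < Filter.limsup (fun n : ℕ =>
      ((∑ i ∈ Finset.range (n + 1), Module.finrank k (𝒜 i) : ℕ) : ℝ) ^ ((n : ℝ)⁻¹))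
      Filter.atTop := by
  obtain ⟨r, hr1, hrz⟩ := hroot
  set M : ℤ := ∑ j ∈ p.support, |p.coeff j|
  have hM : 1 ≤ M := one_le_sum_abs_coeff hp0
  have hdim (n : ℕ) : (Module.finrank k (𝒜 n) : ℝ) ≤ (M : ℝ) ^ n :=
    mod_cast (le_abs_self _).trans (abs_le_pow_of_mk_mul_eq_one hp0 hhilb n)
  have hbdd := isBoundedUnder_rpow_inv_sum_range_of_le_pow (fun n => Nat.cast_nonneg _)
    (by exact_mod_cast hM) hdim
  simp_rw [Nat.cast_sum]
  by_contra! hle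
  have hsum := summable_mul_pow_of_limsup_rpow_inv_sum_range_le_one
    (fun n => Nat.cast_nonneg _) hbdd hle (norm_nonneg r) hr1
  have hnorm : Summable fun n => ‖(Module.finrank k (𝒜 n) : ℤ) • r ^ n‖ :=
    hsum.congr fun n => by simp
  have hone := tsum_smul_pow_mul_aeval_eq_one hhilb hnorm
  rw [hrz, mul_zero] at hone
  exact zero_ne_one hone

open Filter in
/-- Let `A` be a finitely graded `k`-algebra with Hilbert series `h_A(t) = 1/p(t)`
for a polynomial `p ∈ ℤ[t]` with constant term `1`.  If `p` has a complex root `r`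
with `|r| < 1`, then `A` has exponential growth:
`limsup_n (dim A_0 + ⋯ + dim A_n)^{1/n} > 1`. -/
theorem stmt_9 {k A : Type*} [Field k] [Ring A] [Algebra k A]
    (𝒜 : ℕ → Submodule k A) [GradedAlgebra 𝒜]
    (hconn : 𝒜 0 = Submodule.span k {(1 : A)})
    (hfg : Algebra.FiniteType k A)
    (p : Polynomial ℤ) (hp0 : p.coeff 0 = 1)
    (hhilb : (PowerSeries.mk fun n : ℕ => (Module.finrank k (𝒜 n) : ℤ)) *
      (p : PowerSeries ℤ) = 1)
    (hroot : ∃ r : ℂ, ‖r‖ < 1 ∧ Polynomial.aeval r p = 0) :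
    1 < Filter.limsup (fun n : ℕ =>
      ((∑ i ∈ Finset.range (n + 1), Module.finrank k (𝒜 i) : ℕ) : ℝ) ^ ((n : ℝ)⁻¹))
      Filter.atTop :=
  stmt_9_general 𝒜 p hp0 hhilb hroot
end

section
/- Let R be an ℕ-graded k-algebra with graded automorphism τ. For any graded right R-module M, the twisted structure x ⋆ b = x·τ^m(b) (x ∈ M_m, b ∈ R) makes M into a graded right R^τ-module, and M ↦ M^τ gives an equivalence of categories between graded right R-modules and graded right R^τ-modules. -/
/-!
Every identity to be checked is additive in the module variable (and, for the compatibility with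
`zhangMul`, also in the ring variable), so by the direct sum decompositions it suffices to check it
on homogeneous elements. There it reduces to the facts that `τ ^ m` is a ring automorphism
preserving each `𝒜 j` and that `τ ^ m ∘ τ ^ j = τ ^ (m + j)`: for `x ∈ ℳ m` and `a ∈ 𝒜 j`,
`x ⋆ (a ⋆ b) = x · τ^m(a) · τ^(m+j)(b) = (x ⋆ a) ⋆ b` since `x · τ^m(a) ∈ ℳ (m + j)`.
For full faithfulness, `R`-linearity is recovered from `R^τ`-linearity through
`x ⋆ τ^(-m)(b) = x · b` on `ℳ m`, which degree-preserving maps respect.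
-/

/-- The multiplication of the Zhang twist `R^τ` (see `stmt_16`). -/
noncomputable def zhangMul {k R : Type*} [CommRing k] [Ring R] [Algebra k R]
    (𝒜 : ℕ → Submodule k R) [GradedAlgebra 𝒜] (τ : R ≃ₐ[k] R) (a b : R) : R :=
  DFinsupp.sumAddHom
    (fun m => (AddMonoidHom.mulRight ((τ ^ m : R ≃ₐ[k] R) b)).comp
      ((𝒜 m).subtype.toAddMonoidHom))
    (DirectSum.decompose 𝒜 a)

open MulOpposite

theorem DirectSum.IsInternal.ext_of_map_add {ι k M X : Type*} [DecidableEq ι] [Semiring k]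
    [AddCommMonoid M] [Module k M] [AddGroup X] {ℳ : ι → Submodule k M}
    (h : DirectSum.IsInternal ℳ) {f g : M → X} (hfg : ∀ i, ∀ x ∈ ℳ i, f x = g x)
    (hf : ∀ x y, f (x + y) = f x + f y) (hg : ∀ x y, g (x + y) = g x + g y) (x : M) :
    f x = g x := by
  have hx : x ∈ ⨆ i, ℳ i := h.submodule_iSup_eq_top ▸ Submodule.mem_top
  refine Submodule.iSup_induction ℳ (motive := fun x => f x = g x) hx hfg ?_ ?_
  · exact (AddMonoidHom.mk' f hf).map_zero.trans (AddMonoidHom.mk' g hg).map_zero.symm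
  · intro x y hx hy
    rw [hf, hg, hx, hy]

theorem AlgEquiv.zpow_apply_mem_iff {k R : Type*} [CommSemiring k] [Semiring R] [Algebra k R]
    {τ : R ≃ₐ[k] R} {p : Submodule k R} (hτ : p.map τ.toLinearMap = p) (m : ℤ) (a : R) :
    (τ ^ m) a ∈ p ↔ a ∈ p := by
  have hτ_iff (a : R) : τ a ∈ p ↔ a ∈ p := by
    conv_lhs => rw [← hτ]
    exact ⟨fun ⟨c, hc, hca⟩ => τ.injective hca ▸ hc, fun h => ⟨a, h, rfl⟩⟩
  induction m using Int.induction_on generalizing a with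
  | zero => simp
  | succ i ih =>
    rw [zpow_add_one, AlgEquiv.mul_apply]
    exact (ih _).trans (hτ_iff a)
  | pred i ih =>
    rw [zpow_sub_one, AlgEquiv.mul_apply]
    refine (ih _).trans ?_
    rw [← hτ_iff, ← AlgEquiv.mul_apply, mul_inv_cancel, AlgEquiv.one_apply]

section ZhangTwist

variable {k R : Type*} [CommRing k] [Ring R] [Algebra k R]
  {𝒜 : ℕ → Submodule k R} [GradedAlgebra 𝒜] {τ : R ≃ₐ[k] R}

theorem zhangMul_of_mem {j : ℕ} {a : R} (ha : a ∈ 𝒜 j) (b : R) :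
    zhangMul 𝒜 τ a b = a * (τ ^ j) b := by
  change DirectSum.toAddMonoid _ (DirectSum.decompose 𝒜 a) = _
  rw [DirectSum.decompose_of_mem 𝒜 ha, DirectSum.toAddMonoid_of]
  rfl

theorem zhangMul_add_left (a a' b : R) :
    zhangMul 𝒜 τ (a + a') b = zhangMul 𝒜 τ a b + zhangMul 𝒜 τ a' b := by
  simp only [zhangMul, DirectSum.decompose_add, map_add]

end ZhangTwist

structure IsZhangTwistAction {k R M : Type*} [CommRing k] [Ring R] [Algebra k R]
    [AddCommGroup M] [Module k M] [Module Rᵐᵒᵖ M]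
    (ℳ : ℤ → Submodule k M) (τ : R ≃ₐ[k] R) (act : M → R → M) : Prop where
  apply_of_mem : ∀ (m : ℤ) (x : M) (b : R), x ∈ ℳ m → act x b = op ((τ ^ m) b) • x
  add_left : ∀ (x y : M) (b : R), act (x + y) b = act x b + act y b

namespace IsZhangTwistAction

variable {k R M N : Type*} [CommRing k] [Ring R] [Algebra k R] {τ : R ≃ₐ[k] R}
  [AddCommGroup M] [Module k M] [Module Rᵐᵒᵖ M] {ℳ : ℤ → Submodule k M} {act : M → R → M}
  [AddCommGroup N] [Module k N] [Module Rᵐᵒᵖ N] {𝒩 : ℤ → Submodule k N} {actN : N → R → N}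

theorem add_right (h : IsZhangTwistAction ℳ τ act) (hℳ : DirectSum.IsInternal ℳ)
    (x : M) (b b' : R) : act x (b + b') = act x b + act x b' := by
  apply hℳ.ext_of_map_add (x := x)
  · intro m x hx
    rw [h.apply_of_mem m x _ hx, h.apply_of_mem m x _ hx, h.apply_of_mem m x _ hx, map_add,
      op_add, add_smul]
  · exact fun x y => h.add_left x y _
  · intro x y
    rw [h.add_left, h.add_left]
    abel

theorem one_right (h : IsZhangTwistAction ℳ τ act) (hℳ : DirectSum.IsInternal ℳ) (x : M) :
    act x 1 = x := by
  apply hℳ.ext_of_map_add (x := x) _ (fun x y => h.add_left x y 1) (fun _ _ => rfl)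
  intro m x hx
  rw [h.apply_of_mem m x _ hx, map_one, op_one, one_smul]

theorem inv_apply_right (h : IsZhangTwistAction ℳ τ act) {m : ℤ} {x : M} (hx : x ∈ ℳ m)
    (b : R) : act x ((τ ^ m)⁻¹ b) = op b • x := by
  rw [h.apply_of_mem m x _ hx, ← AlgEquiv.mul_apply, mul_inv_cancel, AlgEquiv.one_apply]

variable {𝒜 : ℕ → Submodule k R}

theorem mem (h : IsZhangTwistAction ℳ τ act) (hτ : ∀ n, (𝒜 n).map τ.toLinearMap = 𝒜 n)
    (hmod : ∀ (i : ℤ) (j : ℕ) (x : M) (a : R), x ∈ ℳ i → a ∈ 𝒜 j → op a • x ∈ ℳ (i + j))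
    {i : ℤ} {j : ℕ} {x : M} {b : R} (hx : x ∈ ℳ i) (hb : b ∈ 𝒜 j) : act x b ∈ ℳ (i + j) := by
  rw [h.apply_of_mem i x b hx]
  exact hmod i j x _ hx ((AlgEquiv.zpow_apply_mem_iff (hτ j) i b).mpr hb)

theorem zhangMul_right [GradedAlgebra 𝒜] (h : IsZhangTwistAction ℳ τ act)
    (hℳ : DirectSum.IsInternal ℳ) (hτ : ∀ n, (𝒜 n).map τ.toLinearMap = 𝒜 n)
    (hmod : ∀ (i : ℤ) (j : ℕ) (x : M) (a : R), x ∈ ℳ i → a ∈ 𝒜 j → op a • x ∈ ℳ (i + j))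
    (x : M) (a b : R) : act x (zhangMul 𝒜 τ a b) = act (act x a) b := by
  apply hℳ.ext_of_map_add (x := x) _ (fun x y => h.add_left x y _)
    (fun x y => by rw [h.add_left, h.add_left])
  intro m x hx
  apply (DirectSum.Decomposition.isInternal 𝒜).ext_of_map_add (x := a)
  · intro j a ha
    have hxa : op ((τ ^ m) a) • x ∈ ℳ (m + j) :=
      hmod m j x _ hx ((AlgEquiv.zpow_apply_mem_iff (hτ j) m a).mpr ha)
    rw [zhangMul_of_mem ha, h.apply_of_mem m x _ hx, h.apply_of_mem m x _ hx,
      h.apply_of_mem _ _ b hxa, map_mul, op_mul, mul_smul, zpow_add, AlgEquiv.mul_apply,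
      zpow_natCast]
  · intro a a'
    rw [zhangMul_add_left, h.add_right hℳ]
  · intro a a'
    rw [h.add_right hℳ, h.add_left]

theorem map_smul_iff (hM : IsZhangTwistAction ℳ τ act) (hN : IsZhangTwistAction 𝒩 τ actN)
    (hℳ : DirectSum.IsInternal ℳ) (f : M →ₗ[k] N) (hf : ∀ i, (ℳ i).map f ≤ 𝒩 i) :
    (∀ (x : M) (b : R), f (op b • x) = op b • f x) ↔
      (∀ (x : M) (b : R), f (act x b) = actN (f x) b) := by
  have hfx {i : ℤ} {x : M} (hx : x ∈ ℳ i) : f x ∈ 𝒩 i := hf i ⟨x, hx, rfl⟩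
  constructor
  · intro hlin x b
    apply hℳ.ext_of_map_add (x := x) _ (fun x y => by rw [hM.add_left, map_add])
      (fun x y => by rw [map_add, hN.add_left])
    intro i x hx
    rw [hM.apply_of_mem i x b hx, hlin, hN.apply_of_mem i (f x) b (hfx hx)]
  · intro htw x b
    apply hℳ.ext_of_map_add (x := x) _ (fun x y => by rw [smul_add, map_add])
      (fun x y => by rw [map_add, smul_add])
    intro i x hx
    rw [← hM.inv_apply_right hx, htw, ← hN.inv_apply_right (hfx hx)]

end IsZhangTwistAction

theorem stmt_17_general {k R M N : Type*} [CommRing k] [Ring R] [Algebra k R]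
    (𝒜 : ℕ → Submodule k R) [GradedAlgebra 𝒜] (τ : R ≃ₐ[k] R)
    (hτ : ∀ n : ℕ, Submodule.map τ.toLinearMap (𝒜 n) = 𝒜 n)
    [AddCommGroup M] [Module k M] [Module Rᵐᵒᵖ M]
    (ℳ : ℤ → Submodule k M) (hdecomp : DirectSum.IsInternal ℳ)
    (hmod : ∀ (i : ℤ) (j : ℕ) (x : M) (a : R), x ∈ ℳ i → a ∈ 𝒜 j →
      (MulOpposite.op a) • x ∈ ℳ (i + j))
    (actM : M → R → M)
    (hactM : ∀ (m : ℤ) (x : M) (b : R), x ∈ ℳ m →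
      actM x b = (MulOpposite.op ((τ ^ m : R ≃ₐ[k] R) b)) • x)
    (hactMadd : ∀ (x y : M) (b : R), actM (x + y) b = actM x b + actM y b)
    [AddCommGroup N] [Module k N] [Module Rᵐᵒᵖ N]
    (𝒩 : ℤ → Submodule k N)
    (actN : N → R → N)
    (hactN : ∀ (m : ℤ) (x : N) (b : R), x ∈ 𝒩 m →
      actN x b = (MulOpposite.op ((τ ^ m : R ≃ₐ[k] R) b)) • x)
    (hactNadd : ∀ (x y : N) (b : R), actN (x + y) b = actN x b + actN y b) :
    -- `M^τ` is a graded right `R^τ`-module: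
    (∀ (x : M) (b b' : R), actM x (b + b') = actM x b + actM x b') ∧
    (∀ x : M, actM x 1 = x) ∧
    (∀ (x : M) (a b : R), actM x (zhangMul 𝒜 τ a b) = actM (actM x a) b) ∧
    (∀ (i : ℤ) (j : ℕ) (x : M) (b : R), x ∈ ℳ i → b ∈ 𝒜 j →
      actM x b ∈ ℳ (i + j)) ∧
    -- full faithfulness of the twisting functor on graded homomorphisms:
    (∀ f : M →ₗ[k] N, (∀ i : ℤ, Submodule.map f (ℳ i) ≤ 𝒩 i) →
      ((∀ (x : M) (b : R), f ((MulOpposite.op b) • x) = (MulOpposite.op b) • f x) ↔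
        (∀ (x : M) (b : R), f (actM x b) = actN (f x) b))) ∧
    -- twisting `M^τ` back by `τ⁻¹` recovers the original action:
    (∀ (m : ℤ) (x : M) (b : R), x ∈ ℳ m →
      actM x (((τ ^ m : R ≃ₐ[k] R)⁻¹) b) = (MulOpposite.op b) • x) := by
  have hM : IsZhangTwistAction ℳ τ actM := ⟨hactM, hactMadd⟩
  have hN : IsZhangTwistAction 𝒩 τ actN := ⟨hactN, hactNadd⟩
  exact ⟨hM.add_right hdecomp, hM.one_right hdecomp, hM.zhangMul_right hdecomp hτ hmod,
    fun _ _ _ _ hx hb => hM.mem hτ hmod hx hb, fun f hf => hM.map_smul_iff hN hdecomp f hf,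
    fun _ _ b hx => hM.inv_apply_right hx b⟩

/-- Let `R` be an ℕ-graded `k`-algebra with graded automorphism `τ`, and let `M`
be a graded right `R`-module (encoded as an `Rᵐᵒᵖ`-module with grading `ℳ`).  The
twisted action `x ⋆ b = x·τ^m(b)` for `x ∈ M_m` (encoded by a function `actM`
which is additive in `x` and is given by this formula on homogeneous `x`) makes
`M` into a graded right module over the Zhang twist `R^τ`, and `M ↦ M^τ` gives an
equivalence of categories of graded right modules: it is additive and unital,
compatible with `zhangMul`, preserves the grading; a degreewise `k`-linear map
between two graded modules is `R`-linear iff it is `R^τ`-linear for the twisted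
actions (full faithfulness); and twisting back by `τ⁻¹` recovers the original
action (essential surjectivity of the inverse twist). -/
theorem stmt_17 {k R M N : Type*} [CommRing k] [Ring R] [Algebra k R]
    (𝒜 : ℕ → Submodule k R) [GradedAlgebra 𝒜] (τ : R ≃ₐ[k] R)
    (hτ : ∀ n : ℕ, Submodule.map τ.toLinearMap (𝒜 n) = 𝒜 n)
    [AddCommGroup M] [Module k M] [Module Rᵐᵒᵖ M] [IsScalarTower k Rᵐᵒᵖ M]
    (ℳ : ℤ → Submodule k M) (hdecomp : DirectSum.IsInternal ℳ)
    (hmod : ∀ (i : ℤ) (j : ℕ) (x : M) (a : R), x ∈ ℳ i → a ∈ 𝒜 j →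
      (MulOpposite.op a) • x ∈ ℳ (i + j))
    (actM : M → R → M)
    (hactM : ∀ (m : ℤ) (x : M) (b : R), x ∈ ℳ m →
      actM x b = (MulOpposite.op ((τ ^ m : R ≃ₐ[k] R) b)) • x)
    (hactMadd : ∀ (x y : M) (b : R), actM (x + y) b = actM x b + actM y b)
    [AddCommGroup N] [Module k N] [Module Rᵐᵒᵖ N] [IsScalarTower k Rᵐᵒᵖ N]
    (𝒩 : ℤ → Submodule k N) (hdecompN : DirectSum.IsInternal 𝒩)
    (hmodN : ∀ (i : ℤ) (j : ℕ) (x : N) (a : R), x ∈ 𝒩 i → a ∈ 𝒜 j →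
      (MulOpposite.op a) • x ∈ 𝒩 (i + j))
    (actN : N → R → N)
    (hactN : ∀ (m : ℤ) (x : N) (b : R), x ∈ 𝒩 m →
      actN x b = (MulOpposite.op ((τ ^ m : R ≃ₐ[k] R) b)) • x)
    (hactNadd : ∀ (x y : N) (b : R), actN (x + y) b = actN x b + actN y b) :
    -- `M^τ` is a graded right `R^τ`-module:
    (∀ (x : M) (b b' : R), actM x (b + b') = actM x b + actM x b') ∧
    (∀ x : M, actM x 1 = x) ∧
    (∀ (x : M) (a b : R), actM x (zhangMul 𝒜 τ a b) = actM (actM x a) b) ∧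
    (∀ (i : ℤ) (j : ℕ) (x : M) (b : R), x ∈ ℳ i → b ∈ 𝒜 j →
      actM x b ∈ ℳ (i + j)) ∧
    -- full faithfulness of the twisting functor on graded homomorphisms:
    (∀ f : M →ₗ[k] N, (∀ i : ℤ, Submodule.map f (ℳ i) ≤ 𝒩 i) →
      ((∀ (x : M) (b : R), f ((MulOpposite.op b) • x) = (MulOpposite.op b) • f x) ↔
        (∀ (x : M) (b : R), f (actM x b) = actN (f x) b))) ∧
    -- twisting `M^τ` back by `τ⁻¹` recovers the original action:
    (∀ (m : ℤ) (x : M) (b : R), x ∈ ℳ m →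
      actM x (((τ ^ m : R ≃ₐ[k] R)⁻¹) b) = (MulOpposite.op b) • x) :=
  stmt_17_general 𝒜 τ hτ ℳ hdecomp hmod actM hactM hactMadd 𝒩 actN hactN hactNadd
end

section
/- In the Jordan plane B = k⟨x,y⟩/(yx - xy - x²) over a field of characteristic 0, the relation y·x^n = x^n·y + n·x^{n+1} holds for all n ≥ 1, and consequently the idealizer of the left ideal By, namely {z ∈ B : Byz ⊆ By}, equals the subring A = k + By. -/
/-- The defining relation `yx = xy + x²` of the Jordan plane, inside the free
algebra on two generators (`false` plays the role of `x` and `true` that of `y`). -/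
inductive JordanPlaneRel (k : Type*) [CommRing k] :
    FreeAlgebra k Bool → FreeAlgebra k Bool → Prop
  | rel : JordanPlaneRel k
      (FreeAlgebra.ι k true * FreeAlgebra.ι k false)
      (FreeAlgebra.ι k false * FreeAlgebra.ι k true +
        FreeAlgebra.ι k false * FreeAlgebra.ι k false)

/-! Iterating `yx = xy + x²` gives `y·q(x) = q(x)·y + (X²q')(x)` for every polynomial `q`, so
left multiplication by `x` and by `y` preserves `k[x] + By`, which is therefore all of `B`.
The Jordan plane acts on `k[X]` by `x ↦ X·` and `y ↦ X² d/dX`, and `By` kills `1`. If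
`z = q(x) + b·y` lies in the idealizer then `yz ∈ By`, and letting it act on `1` gives
`X²q' = 0`; in characteristic `0` this forces `q` to be a constant. -/

open Polynomial

theorem mul_pow_eq_of_mul_eq {R : Type*} [Semiring R] {a b : R} (h : b * a = a * b + a * a)
    (n : ℕ) : b * a ^ n = a ^ n * b + n • a ^ (n + 1) := by
  induction n with
  | zero => simp
  | succ n ih =>
    calc b * a ^ (n + 1) = (b * a ^ n) * a := by rw [pow_succ, mul_assoc]
      _ = a ^ n * (b * a) + n • a ^ (n + 2) := by
        rw [ih, add_mul, smul_mul_assoc, mul_assoc, ← pow_succ]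
      _ = a ^ (n + 1) * b + (n + 1) • a ^ (n + 2) := by
        rw [h, mul_add, ← mul_assoc, ← mul_assoc, ← pow_succ, ← pow_succ, succ_nsmul]
        abel

theorem mul_aeval_eq_of_mul_eq {k A : Type*} [CommSemiring k] [Semiring A] [Algebra k A]
    {a b : A} (h : b * a = a * b + a * a) (q : k[X]) :
    b * aeval a q = aeval a q * b + aeval a (X ^ 2 * derivative q) := by
  induction q using Polynomial.induction_on' with
  | add p q hp hq =>
    simp only [map_add, mul_add, add_mul, hp, hq]
    abel
  | monomial n c =>
    rw [derivative_monomial, X_pow_mul, monomial_mul_X_pow, aeval_monomial, aeval_monomial,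
      ← mul_assoc, ← Algebra.commutes c b, mul_assoc, mul_pow_eq_of_mul_eq h, map_mul,
      map_natCast, nsmul_eq_mul, mul_add, mul_assoc, mul_assoc]
    rcases n with _ | n
    · simp
    · rw [Nat.add_sub_cancel]

abbrev JordanPlane (k : Type*) [CommRing k] := RingQuot (JordanPlaneRel k)

namespace JordanPlane

variable {k : Type*} [CommRing k]

def x : JordanPlane k := RingQuot.mkAlgHom k (JordanPlaneRel k) (FreeAlgebra.ι k false)

def y : JordanPlane k := RingQuot.mkAlgHom k (JordanPlaneRel k) (FreeAlgebra.ι k true)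

theorem y_mul_x : (y : JordanPlane k) * x = x * y + x * x := by
  simpa [x, y] using RingQuot.mkAlgHom_rel k (JordanPlaneRel.rel (k := k))

theorem y_mul_aeval_x (q : k[X]) :
    (y : JordanPlane k) * aeval x q = aeval x q * y + aeval x (X ^ 2 * derivative q) :=
  mul_aeval_eq_of_mul_eq y_mul_x q

/-- `k[x] + By` -/
noncomputable def polyXSupMulY : Submodule k (JordanPlane k) :=
  LinearMap.range (aeval (x : JordanPlane k)).toLinearMap ⊔
    LinearMap.range (LinearMap.mulRight k (y : JordanPlane k))

theorem mem_polyXSupMulY {z : JordanPlane k} :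
    z ∈ polyXSupMulY ↔ ∃ (q : k[X]) (b : JordanPlane k), aeval x q + b * y = z := by
  simp [polyXSupMulY, Submodule.mem_sup]

theorem x_mul_mem_polyXSupMulY {z : JordanPlane k} (hz : z ∈ polyXSupMulY) :
    x * z ∈ polyXSupMulY := by
  obtain ⟨q, b, rfl⟩ := mem_polyXSupMulY.1 hz
  refine mem_polyXSupMulY.2 ⟨X * q, x * b, ?_⟩
  rw [map_mul, aeval_X, mul_add, mul_assoc]

theorem y_mul_mem_polyXSupMulY {z : JordanPlane k} (hz : z ∈ polyXSupMulY) :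
    y * z ∈ polyXSupMulY := by
  obtain ⟨q, b, rfl⟩ := mem_polyXSupMulY.1 hz
  refine mem_polyXSupMulY.2 ⟨X ^ 2 * derivative q, aeval x q + y * b, ?_⟩
  rw [mul_add, y_mul_aeval_x, add_mul, mul_assoc]
  abel

theorem polyXSupMulY_eq_top : (polyXSupMulY : Submodule k (JordanPlane k)) = ⊤ := by
  have mul_mem (w : FreeAlgebra k Bool) {z : JordanPlane k} (hz : z ∈ polyXSupMulY) :
      RingQuot.mkAlgHom k (JordanPlaneRel k) w * z ∈ polyXSupMulY := by
    induction w using FreeAlgebra.induction generalizing z with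
    | grade0 r => simpa [Algebra.smul_def] using Submodule.smul_mem _ r hz
    | grade1 s => cases s with
      | false => exact x_mul_mem_polyXSupMulY hz
      | true => exact y_mul_mem_polyXSupMulY hz
    | mul v w hv hw => simpa only [map_mul, mul_assoc] using hv (hw hz)
    | add v w hv hw => simpa only [map_add, add_mul] using add_mem (hv hz) (hw hz)
  have one_mem : (1 : JordanPlane k) ∈ polyXSupMulY := mem_polyXSupMulY.2 ⟨1, 0, by simp⟩
  refine eq_top_iff.2 fun z _ => ?_
  obtain ⟨w, rfl⟩ := RingQuot.mkAlgHom_surjective k (JordanPlaneRel k) z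
  simpa using mul_mem w one_mem

theorem exists_aeval_x_add_mul_y_eq (z : JordanPlane k) :
    ∃ (q : k[X]) (b : JordanPlane k), aeval x q + b * y = z :=
  mem_polyXSupMulY.1 (polyXSupMulY_eq_top (k := k) ▸ Submodule.mem_top)

noncomputable def generatorAction : Bool → Module.End k k[X]
  | false => Algebra.lmul k k[X] X
  | true => Algebra.lmul k k[X] (X ^ 2) ∘ₗ derivative

noncomputable def polyRep : JordanPlane k →ₐ[k] Module.End k k[X] :=
  RingQuot.liftAlgHom k ⟨FreeAlgebra.lift k generatorAction, by
    rintro _ _ ⟨⟩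
    refine LinearMap.ext fun p => ?_
    simp [generatorAction, derivative_mul]
    ring⟩

theorem polyRep_x : polyRep (x : JordanPlane k) = Algebra.lmul k k[X] X := by
  simp [polyRep, x, generatorAction]

theorem polyRep_y_apply (p : k[X]) : polyRep (y : JordanPlane k) p = X ^ 2 * derivative p := by
  simp [polyRep, y, generatorAction]

theorem polyRep_aeval_x_apply (q p : k[X]) : polyRep (aeval x q) p = q * p := by
  rw [← aeval_algHom_apply, polyRep_x, aeval_algHom_apply, aeval_X_left_apply]
  rfl

theorem polyRep_mul_y_apply_one (b : JordanPlane k) : polyRep (b * y) 1 = 0 := by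
  simp [polyRep_y_apply]

theorem polyRep_y_mul_apply (z : JordanPlane k) (p : k[X]) :
    polyRep (y * z) p = X ^ 2 * derivative (polyRep z p) := by
  simp [polyRep_y_apply]

theorem derivative_eq_zero_of_y_mul_eq {q : k[X]} {b b' : JordanPlane k}
    (h : y * (aeval x q + b * y) = b' * y) : derivative q = 0 := by
  have h1 := congrArg (fun w => polyRep w 1) h
  simp only [polyRep_y_mul_apply, map_add, LinearMap.add_apply, polyRep_aeval_x_apply,
    polyRep_mul_y_apply_one, mul_one, add_zero] at h1
  exact (isRegular_X_pow 2).left (h1.trans (mul_zero _).symm)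

end JordanPlane

/-- In the Jordan plane `B = k⟨x,y⟩/(yx - xy - x²)` over a field of characteristic
`0`, the relation `y·xⁿ = xⁿ·y + n·x^{n+1}` holds for all `n ≥ 1`, and consequently
the idealizer `{z ∈ B : Byz ⊆ By}` of the left ideal `By` equals the subring
`A = k + By`. -/
theorem stmt_18 {k : Type*} [Field k] [CharZero k] :
    let B := RingQuot (JordanPlaneRel k)
    let x : B := RingQuot.mkAlgHom k (JordanPlaneRel k) (FreeAlgebra.ι k false)
    let y : B := RingQuot.mkAlgHom k (JordanPlaneRel k) (FreeAlgebra.ι k true)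
    (∀ n : ℕ, 1 ≤ n → y * x ^ n = x ^ n * y + n • x ^ (n + 1)) ∧
    {z : B | ∀ b : B, ∃ b' : B, (b * y) * z = b' * y} =
      {z : B | ∃ (c : k) (b : B), z = algebraMap k B c + b * y} := by
  intro B x y
  refine ⟨fun n _ => mul_pow_eq_of_mul_eq JordanPlane.y_mul_x n,
    Set.ext fun z => ⟨fun hz => ?_, ?_⟩⟩
  · obtain ⟨q, b, rfl⟩ := JordanPlane.exists_aeval_x_add_mul_y_eq (k := k) z
    obtain ⟨b', hb'⟩ := hz 1
    rw [one_mul] at hb'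
    rw [eq_C_of_derivative_eq_zero (JordanPlane.derivative_eq_zero_of_y_mul_eq hb'), aeval_C]
    exact ⟨_, b, rfl⟩
  · rintro ⟨c, b, rfl⟩ a
    refine ⟨a * algebraMap k B c + a * y * b, ?_⟩
    rw [mul_add, add_mul, mul_assoc a, ← Algebra.commutes c y, ← mul_assoc, ← mul_assoc]
end

section
/- Over an algebraically closed field k, every nonzero quadratic relation f ∈ k⟨x,y⟩ of degree 2 can be written uniquely as f = x·τ(x) + y·τ(y) for a nonzero linear map τ : kx + ky → kx + ky, and two such algebras k⟨x,y⟩/(x·τ(x)+y·τ(y)) and k⟨x,y⟩/(x·τ'(x)+y·τ'(y)) are isomorphic as graded algebras if and only if the 2×2 matrices B, B' representing τ, τ' are congruent (B' = CᵗBC for some invertible C). -/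
/-- The quadratic element `f = x·τ(x) + y·τ(y)` of the free algebra `k⟨x,y⟩`
associated to the matrix `B` of the linear map `τ` (so `τ(x) = b₁₁x + b₁₂y`,
`τ(y) = b₂₁x + b₂₂y`); `false` plays the role of `x` and `true` that of `y`. -/
noncomputable def quadRelElt {k : Type*} [CommRing k]
    (B : Matrix (Fin 2) (Fin 2) k) : FreeAlgebra k Bool :=
  FreeAlgebra.ι k false *
      (B 0 0 • FreeAlgebra.ι k false + B 0 1 • FreeAlgebra.ι k true) +
    FreeAlgebra.ι k true *
      (B 1 0 • FreeAlgebra.ι k false + B 1 1 • FreeAlgebra.ι k true)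

/-- The relation `x·τ(x) + y·τ(y) = 0` defining the algebra `A(τ) = k⟨x,y⟩/(f)`. -/
inductive QuadRel (k : Type*) [CommRing k] (B : Matrix (Fin 2) (Fin 2) k) :
    FreeAlgebra k Bool → FreeAlgebra k Bool → Prop
  | rel : QuadRel k B (quadRelElt B) 0


/-! A graded isomorphism `A(B) ≃ A(B')` restricts on generators to a linear substitution
`xᵢ ↦ ∑ⱼ Cᵢⱼ xⱼ`, and such a substitution carries `f_B` to `f_{CᵀBC}`. The relation ideal
of `A(B')` meets degree two only in `k • f_{B'}`, which is detected by `4 × 4` matrix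
representations in which `xᵢxⱼ` acts as `ℓ(Eᵢⱼ) • E₀₃` for functionals `ℓ` with `ℓ(B') = 0`.
So an isomorphism forces `CᵀBC = μ • B'` with `μ ≠ 0`, and a square root of `μ⁻¹`, which
exists as `k` is algebraically closed, can be absorbed into `C`. -/

open FreeAlgebra
open scoped Matrix

theorem Matrix.dual_apply_eq_sum {R m n : Type*} [CommSemiring R] [Fintype m] [Fintype n]
    [DecidableEq m] [DecidableEq n] (ℓ : Module.Dual R (Matrix m n R)) (E : Matrix m n R) :
    ℓ E = ∑ i, ∑ j, E i j * ℓ (Matrix.single i j 1) := by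
  conv_lhs => rw [E.matrix_eq_sum_single]
  simp only [map_sum]
  refine Finset.sum_congr rfl fun i _ => Finset.sum_congr rfl fun j _ => ?_
  rw [← smul_eq_mul, ← map_smul, Matrix.smul_single, smul_eq_mul, mul_one]

section CommRing

variable {k : Type*} [CommRing k]

theorem quadRelElt_eq (B : Matrix (Fin 2) (Fin 2) k) :
    quadRelElt B =
      B 0 0 • (ι k false * ι k false) + B 0 1 • (ι k false * ι k true) +
        B 1 0 • (ι k true * ι k false) + B 1 1 • (ι k true * ι k true) := by
  simp only [quadRelElt, mul_add, mul_smul_comm]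
  abel

noncomputable def quadRelEltₗ : Matrix (Fin 2) (Fin 2) k →ₗ[k] FreeAlgebra k Bool where
  toFun := quadRelElt
  map_add' B B' := by simp only [quadRelElt_eq, Matrix.add_apply]; module
  map_smul' r B := by
    simp only [quadRelElt_eq, Matrix.smul_apply, smul_eq_mul, RingHom.id_apply]; module

theorem span_monomials_le_range_quadRelEltₗ :
    Submodule.span k {w : FreeAlgebra k Bool | ∃ s t : Bool, w = ι k s * ι k t} ≤
      LinearMap.range (quadRelEltₗ (k := k)) := by
  rw [Submodule.span_le]
  rintro _ ⟨s, t, rfl⟩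
  refine ⟨Matrix.single (cond s 1 0) (cond t 1 0) 1, ?_⟩
  cases s <;> cases t <;> simp [quadRelEltₗ, quadRelElt_eq]

noncomputable def cornerRep (ℓ : Module.Dual k (Matrix (Fin 2) (Fin 2) k)) :
    FreeAlgebra k Bool →ₐ[k] Matrix (Fin 4) (Fin 4) k :=
  FreeAlgebra.lift k fun s => cond s
    !![0, 0, 1, 0; 0, 0, 0, ℓ (Matrix.single 0 1 1); 0, 0, 0, ℓ (Matrix.single 1 1 1); 0, 0, 0, 0]
    !![0, 1, 0, 0; 0, 0, 0, ℓ (Matrix.single 0 0 1); 0, 0, 0, ℓ (Matrix.single 1 0 1); 0, 0, 0, 0]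

theorem cornerRep_quadRelElt (ℓ : Module.Dual k (Matrix (Fin 2) (Fin 2) k))
    (E : Matrix (Fin 2) (Fin 2) k) :
    cornerRep ℓ (quadRelElt E) = ℓ E • Matrix.single 0 3 1 := by
  rw [Matrix.dual_apply_eq_sum]
  simp only [quadRelElt_eq, map_add, map_smul, map_mul, cornerRep, FreeAlgebra.lift_ι_apply,
    cond_true, cond_false, Fin.sum_univ_two]
  ext i j
  fin_cases i <;> fin_cases j <;> simp
  ring

theorem quadRelElt_injective : Function.Injective (quadRelElt (k := k)) := by
  intro E E' h
  rw [← sub_eq_zero, ← Module.forall_dual_apply_eq_zero_iff k]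
  intro ℓ
  simpa [cornerRep_quadRelElt, sub_eq_zero] using congrArg (fun x => cornerRep ℓ x 0 3) h

abbrev QuadAlg (k : Type*) [CommRing k] (B : Matrix (Fin 2) (Fin 2) k) := RingQuot (QuadRel k B)

abbrev quadMk (B : Matrix (Fin 2) (Fin 2) k) : FreeAlgebra k Bool →ₐ[k] QuadAlg k B :=
  RingQuot.mkAlgHom k (QuadRel k B)

def degOne (B : Matrix (Fin 2) (Fin 2) k) : Submodule k (QuadAlg k B) :=
  Submodule.span k {quadMk B (ι k false), quadMk B (ι k true)}

theorem quadMk_quadRelElt (B : Matrix (Fin 2) (Fin 2) k) : quadMk B (quadRelElt B) = 0 := by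
  simpa using RingQuot.mkAlgHom_rel k (QuadRel.rel (B := B))

noncomputable def quadCornerRep {B : Matrix (Fin 2) (Fin 2) k}
    (ℓ : Module.Dual k (Matrix (Fin 2) (Fin 2) k)) (hℓ : ℓ B = 0) :
    QuadAlg k B →ₐ[k] Matrix (Fin 4) (Fin 4) k :=
  RingQuot.liftAlgHom k ⟨cornerRep ℓ, by rintro _ _ ⟨⟩; simp [cornerRep_quadRelElt, hℓ]⟩

theorem quadCornerRep_quadMk {B : Matrix (Fin 2) (Fin 2) k}
    (ℓ : Module.Dual k (Matrix (Fin 2) (Fin 2) k)) (hℓ : ℓ B = 0) (x : FreeAlgebra k Bool) :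
    quadCornerRep ℓ hℓ (quadMk B x) = cornerRep ℓ x :=
  RingQuot.liftAlgHom_mkAlgHom_apply k _ _ x

noncomputable def linSubst (C : Matrix (Fin 2) (Fin 2) k) :
    FreeAlgebra k Bool →ₐ[k] FreeAlgebra k Bool :=
  FreeAlgebra.lift k fun s => cond s
    (C 1 0 • ι k false + C 1 1 • ι k true) (C 0 0 • ι k false + C 0 1 • ι k true)

@[simp] theorem linSubst_ι_false (C : Matrix (Fin 2) (Fin 2) k) :
    linSubst C (ι k false) = C 0 0 • ι k false + C 0 1 • ι k true := by
  simp [linSubst]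

@[simp] theorem linSubst_ι_true (C : Matrix (Fin 2) (Fin 2) k) :
    linSubst C (ι k true) = C 1 0 • ι k false + C 1 1 • ι k true := by
  simp [linSubst]

theorem linSubst_quadRelElt (C B : Matrix (Fin 2) (Fin 2) k) :
    linSubst C (quadRelElt B) = quadRelElt (Cᵀ * B * C) := by
  simp only [quadRelElt_eq, map_add, map_smul, map_mul, linSubst_ι_false, linSubst_ι_true,
    Matrix.mul_apply, Matrix.transpose_apply, Fin.sum_univ_two, mul_add, add_mul,
    smul_mul_assoc, mul_smul_comm, smul_smul, smul_add, add_smul]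
  module

theorem linSubst_comp_linSubst (C D : Matrix (Fin 2) (Fin 2) k) :
    (linSubst D).comp (linSubst C) = linSubst (C * D) := by
  ext s
  cases s <;>
    simp only [Function.comp_apply, AlgHom.comp_apply, map_add, map_smul, linSubst_ι_false,
      linSubst_ι_true, Matrix.mul_apply, Fin.sum_univ_two, smul_add, smul_smul, add_smul] <;>
    module

theorem linSubst_one : linSubst (1 : Matrix (Fin 2) (Fin 2) k) = AlgHom.id k _ := by
  ext s
  cases s <;> simp

theorem quadMk_comp_linSubst_injective (B : Matrix (Fin 2) (Fin 2) k) :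
    Function.Injective fun C => (quadMk B).comp (linSubst C) := by
  intro C D h
  -- Row `0` of the image of `xᵢ` under a corner representation is `(0, eᵢ, 0)`.
  have row (s : Bool) (j : Fin 4) :=
    congrArg (fun x => quadCornerRep 0 (LinearMap.zero_apply B) x 0 j)
      (AlgHom.congr_fun h (ι k s))
  ext i j
  fin_cases i <;> fin_cases j
  · simpa [quadCornerRep_quadMk, cornerRep] using row false 1
  · simpa [quadCornerRep_quadMk, cornerRep] using row false 2
  · simpa [quadCornerRep_quadMk, cornerRep] using row true 1
  · simpa [quadCornerRep_quadMk, cornerRep] using row true 2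

noncomputable def liftLinSubst {B B' : Matrix (Fin 2) (Fin 2) k} (C : Matrix (Fin 2) (Fin 2) k)
    (h : Cᵀ * B * C = B') : QuadAlg k B →ₐ[k] QuadAlg k B' :=
  RingQuot.liftAlgHom k ⟨(quadMk B').comp (linSubst C), by
    rintro _ _ ⟨⟩
    simp [linSubst_quadRelElt, h, quadMk_quadRelElt]⟩

theorem liftLinSubst_comp_quadMk {B B' : Matrix (Fin 2) (Fin 2) k}
    (C : Matrix (Fin 2) (Fin 2) k) (h : Cᵀ * B * C = B') :
    (liftLinSubst C h).comp (quadMk B) = (quadMk B').comp (linSubst C) :=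
  AlgHom.ext (RingQuot.liftAlgHom_mkAlgHom_apply k _ _)

theorem liftLinSubst_comp_liftLinSubst_of_mul_eq_one {B₁ B₂ M N : Matrix (Fin 2) (Fin 2) k}
    (hM : Mᵀ * B₁ * M = B₂) (hN : Nᵀ * B₂ * N = B₁) (hMN : M * N = 1) :
    (liftLinSubst N hN).comp (liftLinSubst M hM) = AlgHom.id k _ := by
  apply RingQuot.ringQuot_ext'
  rw [AlgHom.comp_assoc, liftLinSubst_comp_quadMk, ← AlgHom.comp_assoc,
    liftLinSubst_comp_quadMk, AlgHom.comp_assoc, linSubst_comp_linSubst, hMN, linSubst_one]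
  rfl

theorem map_degOne_le_of_comp_quadMk {B B' C : Matrix (Fin 2) (Fin 2) k}
    (φ : QuadAlg k B →ₐ[k] QuadAlg k B')
    (hφ : φ.comp (quadMk B) = (quadMk B').comp (linSubst C)) :
    (degOne B).map φ.toLinearMap ≤ degOne B' := by
  rw [degOne, Submodule.map_span_le]
  have hx := AlgHom.congr_fun hφ (ι k false)
  have hy := AlgHom.congr_fun hφ (ι k true)
  simp only [AlgHom.comp_apply, linSubst_ι_false, linSubst_ι_true, map_add, map_smul] at hx hy
  rintro _ (rfl | rfl) <;>
    simp only [AlgHom.toLinearMap_apply, hx, hy, degOne, Submodule.mem_span_pair] <;>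
    exact ⟨_, _, rfl⟩

theorem exists_comp_quadMk_of_map_degOne_le {B B' : Matrix (Fin 2) (Fin 2) k}
    (φ : QuadAlg k B →ₐ[k] QuadAlg k B') (hφ : (degOne B).map φ.toLinearMap ≤ degOne B') :
    ∃ C, φ.comp (quadMk B) = (quadMk B').comp (linSubst C) := by
  have mem (s : Bool) : φ (quadMk B (ι k s)) ∈ degOne B' :=
    hφ (Submodule.mem_map_of_mem (Submodule.subset_span (by cases s <;> simp)))
  obtain ⟨c₀₀, c₀₁, hx⟩ := Submodule.mem_span_pair.mp (mem false)
  obtain ⟨c₁₀, c₁₁, hy⟩ := Submodule.mem_span_pair.mp (mem true)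
  refine ⟨!![c₀₀, c₀₁; c₁₀, c₁₁], ?_⟩
  ext s
  cases s <;> simp [← hx, ← hy]

theorem exists_algEquiv_map_degOne_of_isUnit (B : Matrix (Fin 2) (Fin 2) k)
    {C : Matrix (Fin 2) (Fin 2) k} (hC : IsUnit C) :
    ∃ φ : QuadAlg k B ≃ₐ[k] QuadAlg k (Cᵀ * B * C),
      (degOne B).map φ.toLinearMap = degOne (Cᵀ * B * C) := by
  have hdet : IsUnit C.det := (Matrix.isUnit_iff_isUnit_det C).mp hC
  have hCD : C * C⁻¹ = 1 := Matrix.mul_nonsing_inv C hdet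
  have hDC : C⁻¹ * C = 1 := Matrix.nonsing_inv_mul C hdet
  have hback : C⁻¹ᵀ * (Cᵀ * B * C) * C⁻¹ = B := by
    calc C⁻¹ᵀ * (Cᵀ * B * C) * C⁻¹ = (C * C⁻¹)ᵀ * B * (C * C⁻¹) := by
          simp only [Matrix.transpose_mul, Matrix.mul_assoc]
      _ = B := by simp [hCD]
  let φ := liftLinSubst (B := B) C rfl
  let ψ := liftLinSubst C⁻¹ hback
  have hψφ := liftLinSubst_comp_liftLinSubst_of_mul_eq_one rfl hback hCD
  have hφψ := liftLinSubst_comp_liftLinSubst_of_mul_eq_one hback rfl hDC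
  refine ⟨AlgEquiv.ofAlgHom φ ψ hφψ hψφ, le_antisymm
    (map_degOne_le_of_comp_quadMk φ (liftLinSubst_comp_quadMk C rfl)) ?_⟩
  calc degOne (Cᵀ * B * C)
      = ((degOne (Cᵀ * B * C)).map ψ.toLinearMap).map φ.toLinearMap := by
        rw [← Submodule.map_comp, ← AlgHom.comp_toLinearMap, hφψ, AlgHom.toLinearMap_id,
          Submodule.map_id]
    _ ≤ (degOne B).map φ.toLinearMap :=
        Submodule.map_mono
          (map_degOne_le_of_comp_quadMk ψ (liftLinSubst_comp_quadMk C⁻¹ hback))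

end CommRing

section Field

variable {k : Type*} [Field k]

theorem mem_span_singleton_of_quadMk_quadRelElt_eq_zero {B E : Matrix (Fin 2) (Fin 2) k}
    (h : quadMk B (quadRelElt E) = 0) : E ∈ k ∙ B := by
  by_contra hE
  obtain ⟨ℓ, hℓE, hℓB⟩ := Submodule.exists_dual_map_eq_bot_of_notMem hE inferInstance
  have hℓ : ℓ B = 0 := by simpa [Submodule.map_span] using hℓB
  have := congrArg (fun x => quadCornerRep ℓ hℓ x 0 3) h
  simp [quadCornerRep_quadMk, cornerRep_quadRelElt] at this
  exact hℓE this

theorem exists_isUnit_congr_eq_smul_of_algEquiv {B B' : Matrix (Fin 2) (Fin 2) k} (hB : B ≠ 0)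
    (φ : QuadAlg k B ≃ₐ[k] QuadAlg k B') (hφ : (degOne B).map φ.toLinearMap = degOne B') :
    ∃ (C : Matrix (Fin 2) (Fin 2) k) (μ : k), IsUnit C ∧ μ ≠ 0 ∧ Cᵀ * B * C = μ • B' := by
  have hφ' : (degOne B').map φ.symm.toLinearMap = degOne B :=
    (Submodule.map_symm_eq_iff φ.toLinearEquiv).mpr hφ
  obtain ⟨C, hC⟩ := exists_comp_quadMk_of_map_degOne_le φ.toAlgHom hφ.le
  obtain ⟨D, hD⟩ := exists_comp_quadMk_of_map_degOne_le φ.symm.toAlgHom hφ'.le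
  have hCD : C * D = 1 := by
    apply quadMk_comp_linSubst_injective B
    dsimp only
    rw [linSubst_one, ← linSubst_comp_linSubst, ← AlgHom.comp_assoc, ← hD, AlgHom.comp_assoc,
      ← hC]
    ext x
    simp
  have hCunit : IsUnit C :=
    (Matrix.isUnit_iff_isUnit_det C).mpr (Matrix.isUnit_det_of_right_inverse hCD)
  obtain ⟨μ, hμ⟩ : ∃ μ : k, μ • B' = Cᵀ * B * C := by
    refine Submodule.mem_span_singleton.mp (mem_span_singleton_of_quadMk_quadRelElt_eq_zero ?_)
    rw [← linSubst_quadRelElt, ← AlgHom.comp_apply, ← hC]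
    simp [quadMk_quadRelElt]
  refine ⟨C, μ, hCunit, ?_, hμ.symm⟩
  rintro rfl
  have hCTunit : IsUnit Cᵀ := (Matrix.isUnit_transpose C).mpr hCunit
  rw [zero_smul, eq_comm, hCunit.mul_left_eq_zero, hCTunit.mul_right_eq_zero] at hμ
  exact hB hμ

theorem exists_congr_of_congr_eq_smul [IsAlgClosed k] {B B' C : Matrix (Fin 2) (Fin 2) k}
    {μ : k} (hC : IsUnit C) (hμ : μ ≠ 0) (h : Cᵀ * B * C = μ • B') :
    ∃ C' : Matrix (Fin 2) (Fin 2) k, IsUnit C' ∧ B' = C'ᵀ * B * C' := by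
  obtain ⟨s, hs⟩ := IsAlgClosed.exists_pow_nat_eq μ⁻¹ two_pos
  have hs0 : s ≠ 0 := by
    rintro rfl
    simp [hμ.symm] at hs
  refine ⟨s • C, by simpa using hC.smul (Units.mk0 s hs0), ?_⟩
  rw [Matrix.transpose_smul, Matrix.smul_mul, Matrix.smul_mul, Matrix.mul_smul, h, smul_smul,
    smul_smul, ← sq, hs, inv_mul_cancel₀ hμ, one_smul]

end Field

/-- Over an algebraically closed field `k`: (a) every nonzero homogeneous element
`f ∈ k⟨x,y⟩` of degree `2` can be written uniquely as `f = x·τ(x) + y·τ(y)` for a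
(necessarily nonzero) linear map `τ`, encoded by its matrix `B`; and (b) the
algebras `A(τ) = k⟨x,y⟩/(x·τ(x)+y·τ(y))` and `A(τ')` are isomorphic as graded
algebras (i.e. by a `k`-algebra isomorphism carrying the degree-one part onto the
degree-one part) if and only if the matrices `B`, `B'` of `τ`, `τ'` are congruent:
`B' = Cᵀ·B·C` for some invertible `C`. -/
theorem stmt_19 {k : Type*} [Field k] [IsAlgClosed k] :
    (∀ f : FreeAlgebra k Bool,
      f ∈ Submodule.span k {w : FreeAlgebra k Bool | ∃ s t : Bool,
        w = FreeAlgebra.ι k s * FreeAlgebra.ι k t} →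
      f ≠ 0 →
      (∃! B : Matrix (Fin 2) (Fin 2) k, quadRelElt B = f) ∧
      (∀ B : Matrix (Fin 2) (Fin 2) k, quadRelElt B = f → B ≠ 0)) ∧
    (∀ B B' : Matrix (Fin 2) (Fin 2) k, B ≠ 0 → B' ≠ 0 →
      ((∃ φ : RingQuot (QuadRel k B) ≃ₐ[k] RingQuot (QuadRel k B'),
          Submodule.map (φ.toLinearMap : RingQuot (QuadRel k B) →ₗ[k]
              RingQuot (QuadRel k B'))
            (Submodule.span k
              {RingQuot.mkAlgHom k (QuadRel k B) (FreeAlgebra.ι k false),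
               RingQuot.mkAlgHom k (QuadRel k B) (FreeAlgebra.ι k true)}) =
          Submodule.span k
            {RingQuot.mkAlgHom k (QuadRel k B') (FreeAlgebra.ι k false),
             RingQuot.mkAlgHom k (QuadRel k B') (FreeAlgebra.ι k true)}) ↔
        ∃ C : Matrix (Fin 2) (Fin 2) k, IsUnit C ∧ B' = C.transpose * B * C)) := by
  refine ⟨fun f hf hf0 => ?_, fun B B' hB _ => ⟨?_, ?_⟩⟩
  · obtain ⟨B, rfl⟩ := span_monomials_le_range_quadRelEltₗ hf
    refine ⟨⟨B, rfl, fun B' h => quadRelElt_injective h⟩, ?_⟩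
    rintro B' h rfl
    exact hf0 (h ▸ map_zero quadRelEltₗ)
  · rintro ⟨φ, hφ⟩
    obtain ⟨C, μ, hC, hμ, h⟩ := exists_isUnit_congr_eq_smul_of_algEquiv hB φ hφ
    exact exists_congr_of_congr_eq_smul hC hμ h
  · rintro ⟨C, hC, rfl⟩
    exact exists_algEquiv_map_degOne_of_isUnit B hC
end
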